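/- arXiv:2106.07840 — 15 statements merged into one kernel-verified Lean document; each statement's English description precedes it below -/
import Mathlib

section
/- For any integer i with 4^{h-1}+1 ≤ i ≤ (4^h−1)/3, there exists an integer t with 1 ≤ t ≤ h−1 such that (i·4^t mod (4^h+1)) ≤ 4^{h-1}. -/
/-! Let `N = 4m + 1` with `m = 4^(h-1)` and `r_t = i·4^t mod N`. While `r_t > m` we have
`4 r_t ≥ N`, so `r_{t+1} = 4 r_t - N`, and then `3 r_t - N = 4^t (3 i - N) ≤ -2·4^t` because
`3 i ≤ N - 2`. At `t = h - 1` this gives `3 r_t ≤ 2m + 1`, which contradicts `r_t > m`. -/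

lemma four_mul_mod_eq_sub {N r : ℕ} (hle : N ≤ 4 * r) (hlt : 2 * r < N) :
    4 * r % N = 4 * r - N := by
  rw [Nat.mod_eq_sub_mod hle, Nat.mod_eq_of_lt (by omega)]

lemma three_mul_mod_add_le {m i : ℕ} (hi : 3 * i + 2 ≤ 4 * m + 1) :
    ∀ t, (∀ s ≤ t, m < i * 4 ^ s % (4 * m + 1)) →
      3 * (i * 4 ^ t % (4 * m + 1)) + 2 * 4 ^ t ≤ 4 * m + 1
  | 0, _ => by
    rw [pow_zero, mul_one, Nat.mod_eq_of_lt (by omega)]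
    omega
  | t + 1, habove => by
    have ih := three_mul_mod_add_le hi t fun s hs => habove s (by omega)
    have hr := habove t (by omega)
    set r := i * 4 ^ t % (4 * m + 1)
    have hstep : i * 4 ^ (t + 1) % (4 * m + 1) = 4 * r - (4 * m + 1) := by
      rw [← four_mul_mod_eq_sub (by omega) (by omega), pow_succ, ← mul_assoc, mul_comm,
        Nat.mul_mod_mod]
    rw [hstep, pow_succ]
    omega

theorem stmt_0_general (h : ℕ) (i : ℕ)
    (h1 : 4 ^ (h - 1) + 1 ≤ i) (h2 : i ≤ (4 ^ h - 1) / 3) :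
    ∃ t : ℕ, 1 ≤ t ∧ t ≤ h - 1 ∧ (i * 4 ^ t) % (4 ^ h + 1) ≤ 4 ^ (h - 1) := by
  have hpos : 0 < h := Nat.pos_of_ne_zero fun h0 => by subst h0; simp at h2; omega
  have hN : 4 ^ h = 4 * 4 ^ (h - 1) := by
    rw [← pow_succ', Nat.sub_add_cancel hpos]
  rw [hN] at h2 ⊢
  by_contra! hnone
  have habove : ∀ s ≤ h - 1, 4 ^ (h - 1) < i * 4 ^ s % (4 * 4 ^ (h - 1) + 1) := by
    intro s hs
    rcases Nat.eq_zero_or_pos s with rfl | hs0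
    · rw [pow_zero, mul_one, Nat.mod_eq_of_lt (by omega)]
      omega
    · exact hnone s hs0 hs
  have hbound := three_mul_mod_add_le (by omega) (h - 1) habove
  have hlast := habove (h - 1) le_rfl
  omega

theorem stmt_0 (h : ℕ) (hh : 3 ≤ h) (i : ℕ)
    (h1 : 4 ^ (h - 1) + 1 ≤ i) (h2 : i ≤ (4 ^ h - 1) / 3) :
    ∃ t : ℕ, 1 ≤ t ∧ t ≤ h - 1 ∧ (i * 4 ^ t) % (4 ^ h + 1) ≤ 4 ^ (h - 1) :=
  stmt_0_general h i h1 h2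
end

section
/- For every integer i with 4^{h-1}+1 ≤ i ≤ δ, where δ = (4^h−1)/3, the 4-cyclotomic coset of i modulo n = 4^h+1 contains an element that is at most 4^{h-1}; consequently i belongs to T = ⋃_{j=0}^{4^{h-1}} C_j^{(4)}. -/
/-!
Write `n = 4 ^ h + 1`. If `4 ^ (h - 1) < x` and `3 x < n`, then `n < 4 x < 2 n`, so multiplication
by `4` sends `x` to `4 x - n`, which is smaller than `x` and lies in the same coset. Descending from
`i` therefore reaches an element of the coset that is at most `4 ^ (h - 1)`. Since
`4 ^ (2 h) ≡ 1 [MOD n]`, multiplication by `4` is invertible modulo `n`, so conversely `i` lies in the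
coset of that element.
-/

theorem Nat.sq_mod_add_one {m : ℕ} (hm : 1 ≤ m) : m ^ 2 % (m + 1) = 1 := by
  have hsq : m ^ 2 = 1 + (m - 1) * (m + 1) := by
    zify [hm]
    ring
  rw [hsq, Nat.add_mul_mod_self_right, Nat.mod_eq_of_lt (by omega)]

theorem Nat.eq_mul_pow_mod_mul_pow_mod {b n k x : ℕ} (j : ℕ) (hk : 0 < k) (hbk : b ^ k % n = 1)
    (hx : x < n) : x = x * b ^ j % n * b ^ ((k - 1) * j) % n := by
  have hexp : j + (k - 1) * j = k * j := by
    obtain ⟨k, rfl⟩ := Nat.exists_eq_add_of_lt hk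
    simp only [Nat.add_sub_cancel]
    ring
  rw [Nat.mod_mul_mod, mul_assoc, ← pow_add, hexp, pow_mul, Nat.mul_mod, Nat.pow_mod, hbk,
    one_pow, ← Nat.mul_mod, mul_one, Nat.mod_eq_of_lt hx]

theorem Nat.four_mul_mod_lt {n a x : ℕ} (hn : n ≤ 4 * a + 1) (hax : a < x) (hx : 3 * x < n) :
    4 * x % n < x := by
  rw [Nat.mod_eq_sub_mod (by omega), Nat.mod_eq_of_lt (by omega)]
  omega

theorem Nat.exists_mul_four_pow_mod_le {n a x : ℕ} (hn : n ≤ 4 * a + 1) (hx : 3 * x < n) :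
    ∃ j, x * 4 ^ j % n ≤ a := by
  induction x using Nat.strong_induction_on with
  | _ x ih =>
    by_cases hax : x ≤ a
    · exact ⟨0, by rw [pow_zero, mul_one, Nat.mod_eq_of_lt (by omega)]; exact hax⟩
    · have hlt := Nat.four_mul_mod_lt hn (not_le.mp hax) hx
      obtain ⟨j, hj⟩ := ih (4 * x % n) hlt (by omega)
      refine ⟨j + 1, ?_⟩
      rw [Nat.mod_mul_mod] at hj
      rwa [pow_succ', ← mul_assoc, mul_comm x 4]

theorem stmt_1_general (h : ℕ) (hh : 1 ≤ h) (i : ℕ)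
    (h2 : i ≤ (4 ^ h - 1) / 3) :
    (∃ j : ℕ, (i * 4 ^ j) % (4 ^ h + 1) ≤ 4 ^ (h - 1)) ∧
      (∃ s ≤ 4 ^ (h - 1), ∃ j : ℕ, i = (s * 4 ^ j) % (4 ^ h + 1)) := by
  have hpow : 4 ^ h = 4 * 4 ^ (h - 1) := by
    rw [← pow_succ', Nat.sub_add_cancel hh]
  have h3i : i * 3 ≤ 4 ^ h - 1 := (Nat.le_div_iff_mul_le (by norm_num)).mp h2
  obtain ⟨j, hj⟩ := Nat.exists_mul_four_pow_mod_le (n := 4 ^ h + 1) (a := 4 ^ (h - 1)) (x := i)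
    (by omega) (by omega)
  have horder : 4 ^ (2 * h) % (4 ^ h + 1) = 1 := by
    rw [mul_comm, pow_mul, Nat.sq_mod_add_one (Nat.one_le_pow _ _ (by norm_num))]
  exact ⟨⟨j, hj⟩, _, hj, (2 * h - 1) * j,
    Nat.eq_mul_pow_mod_mul_pow_mod j (by omega) horder (by omega)⟩

theorem stmt_1 (h : ℕ) (hh : 1 ≤ h) (i : ℕ)
    (h1 : 4 ^ (h - 1) + 1 ≤ i) (h2 : i ≤ (4 ^ h - 1) / 3) :
    (∃ j : ℕ, (i * 4 ^ j) % (4 ^ h + 1) ≤ 4 ^ (h - 1)) ∧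
      (∃ s ≤ 4 ^ (h - 1), ∃ j : ℕ, i = (s * 4 ^ j) % (4 ^ h + 1)) :=
  stmt_1_general h hh i h2
end

section
/- The set T = ⋃_{i=0}^{4^{h-1}} C_i^{(4)} of 4-cyclotomic cosets modulo n = 4^h+1 contains both {0, 1, ..., (4^h−1)/3} and {n−1, n−2, ..., n−(4^h−1)/3}. -/
/-!
Modulo `n = q ^ h + 1` we have `q ^ h ≡ -1`, so `q ^ (2 * h) ≡ 1` and multiplication by `q` is
invertible on cyclotomic cosets. If `(q - 1) * a < q ^ h` but `a > q ^ (h - 1)`, then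
`q * a mod n = q * a - n` is a smaller number with the same bound in the same coset, so descending
reaches a representative `≤ q ^ (h - 1)`. Multiplying by `q ^ h` sends `a` to `n - a`, which gives the
reflected range.
-/

def cyclotomicCoset (q n i : ℕ) : Set ℕ := {x | ∃ j, x = i * q ^ j % n}

namespace cyclotomicCoset

variable {q n i x : ℕ}

theorem self_mem (hi : i < n) : i ∈ cyclotomicCoset q n i :=
  ⟨0, by rw [pow_zero, mul_one, Nat.mod_eq_of_lt hi]⟩

theorem mul_pow_mod_mem (hx : x ∈ cyclotomicCoset q n i) (k : ℕ) :
    x * q ^ k % n ∈ cyclotomicCoset q n i := by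
  obtain ⟨j, rfl⟩ := hx
  exact ⟨j + k, by rw [Nat.mod_mul_mod, pow_add, mul_assoc]⟩

theorem mem_of_mul_mod_mem {m : ℕ} (hqm : q ^ m ≡ 1 [MOD n]) (hm : 0 < m) (hx : x < n)
    (h : x * q % n ∈ cyclotomicCoset q n i) : x ∈ cyclotomicCoset q n i := by
  have hxq : x * q ^ m % n = x := by
    simpa [Nat.ModEq, Nat.mod_eq_of_lt hx] using hqm.mul_left x
  have := mul_pow_mod_mem h (m - 1)
  rwa [Nat.mod_mul_mod, mul_assoc, ← pow_succ', Nat.sub_add_cancel hm, hxq] at this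

end cyclotomicCoset

open cyclotomicCoset

section PowAddOne

variable {q h : ℕ}

theorem mul_pow_mod_pow_add_one {i : ℕ} (hi : 0 < i) (hin : i ≤ q ^ h + 1) :
    i * q ^ h % (q ^ h + 1) = q ^ h + 1 - i := by
  have hsplit : i * q ^ h = (q ^ h + 1 - i) + (i - 1) * (q ^ h + 1) := by
    zify [hi, hin]
    ring
  rw [hsplit, Nat.add_mul_mod_self_right, Nat.mod_eq_of_lt (by omega)]

theorem pow_two_mul_modEq_one (hq : 0 < q) : q ^ (2 * h) ≡ 1 [MOD q ^ h + 1] := by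
  have hpos : 0 < q ^ h := pow_pos hq h
  unfold Nat.ModEq
  rw [two_mul, pow_add, mul_pow_mod_pow_add_one hpos (by omega), Nat.mod_eq_of_lt (by omega)]
  omega

theorem exists_le_mem_cyclotomicCoset (hq : 2 ≤ q) {a : ℕ} (ha : (q - 1) * a < q ^ h) :
    ∃ i ≤ q ^ (h - 1), a ∈ cyclotomicCoset q (q ^ h + 1) i := by
  induction a using Nat.strong_induction_on with
  | _ a ih =>
  have hale : a ≤ (q - 1) * a := Nat.le_mul_of_pos_left a (by omega)
  by_cases hsmall : a ≤ q ^ (h - 1)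
  · exact ⟨a, hsmall, self_mem (by omega)⟩
  have hh : h ≠ 0 := by
    rintro rfl
    simp only [pow_zero] at ha hsmall
    omega
  have hpow : q ^ h = q * q ^ (h - 1) := by
    rw [← pow_succ', Nat.sub_add_cancel (by omega)]
  have hqa : q * q ^ (h - 1) < q * a := Nat.mul_lt_mul_of_pos_left (by omega) (by omega)
  have ha' : q * a - a < q ^ h := by rwa [Nat.sub_one_mul] at ha
  have hle : a ≤ q * a := Nat.le_mul_of_pos_left a (by omega)
  set b := q * a - (q ^ h + 1)
  have hba : b < a := by omega
  obtain ⟨i, hi, hbi⟩ := ih b hba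
    (lt_of_le_of_lt (Nat.mul_le_mul_left _ hba.le) ha)
  refine ⟨i, hi, mem_of_mul_mod_mem (pow_two_mul_modEq_one (by omega)) (by omega) (by omega) ?_⟩
  rwa [mul_comm, show q * a = b + (q ^ h + 1) by omega, Nat.add_mod_right,
    Nat.mod_eq_of_lt (by omega)]

theorem pow_add_one_sub_mem_cyclotomicCoset {i x : ℕ}
    (hx : x ∈ cyclotomicCoset q (q ^ h + 1) i) (hx0 : 0 < x) (hxn : x ≤ q ^ h + 1) :
    q ^ h + 1 - x ∈ cyclotomicCoset q (q ^ h + 1) i := by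
  rw [← mul_pow_mod_pow_add_one hx0 hxn]
  exact mul_pow_mod_mem hx h

end PowAddOne

theorem stmt_2_general (h : ℕ) :
    let n := 4 ^ h + 1
    let T : Set ℕ := {x | ∃ i ≤ 4 ^ (h - 1), ∃ j : ℕ, x = (i * 4 ^ j) % n}
    (∀ a ≤ (4 ^ h - 1) / 3, a ∈ T) ∧
      (∀ i, 1 ≤ i → i ≤ (4 ^ h - 1) / 3 → n - i ∈ T) := by
  intro n T
  have hbound : ∀ a ≤ (4 ^ h - 1) / 3, (4 - 1) * a < 4 ^ h := by
    intro a ha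
    have := (Nat.le_div_iff_mul_le (by norm_num)).1 ha
    have : 0 < 4 ^ h := by positivity
    omega
  refine ⟨fun a ha => exists_le_mem_cyclotomicCoset (by norm_num) (hbound a ha), ?_⟩
  intro i hi hiδ
  obtain ⟨k, hk, hik⟩ := exists_le_mem_cyclotomicCoset (by norm_num) (hbound i hiδ)
  exact ⟨k, hk, pow_add_one_sub_mem_cyclotomicCoset hik hi (by have := hbound i hiδ; omega)⟩

theorem stmt_2 (h : ℕ) (hh : 1 ≤ h) :
    let n := 4 ^ h + 1
    let T : Set ℕ := {x | ∃ i ≤ 4 ^ (h - 1), ∃ j : ℕ, x = (i * 4 ^ j) % n}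
    (∀ a ≤ (4 ^ h - 1) / 3, a ∈ T) ∧
      (∀ i, 1 ≤ i → i ≤ (4 ^ h - 1) / 3 → n - i ∈ T) :=
  stmt_2_general h
end

section
/- The set T^c = { Σ_{i=0}^{h-1} a_i 4^i : a_0 ∈ {2,3}, a_i ∈ {1,2} for 1 ≤ i ≤ h−1 } is closed under multiplication by 4 modulo n = 4^h+1; that is, T^c is a union of 4-cyclotomic cosets modulo n. -/
/-!
Reading base-4 digits, multiplication by `4` shifts every digit up one place, and the top digit
`d (h-1)` overflows to `d (h-1) * 4 ^ h ≡ -d (h-1) (mod 4 ^ h + 1)`. Borrowing one unit from the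
digit `d 0` (now in place 1) turns this into the digit string
`4 - d (h-1), d 0 - 1, d 1, …, d (h-2)`, which again has its lowest digit in `{2, 3}` and the
others in `{1, 2}`. For `h = 1` directly `4 * d 0 ≡ 5 - d 0 (mod 5)`.
-/

open Finset

lemma sum_digit_mul_pow_lt {b : ℕ} (m : ℕ) (c : ℕ → ℕ) (hc : ∀ i < m, c i < b) :
    ∑ i ∈ range m, c i * b ^ i < b ^ m := by
  induction m with
  | zero => simp
  | succ m ih =>
    rw [sum_range_succ, pow_succ]
    have hlow := ih fun i hi => hc i (by omega)
    have htop : (c m + 1) * b ^ m ≤ b * b ^ m := Nat.mul_le_mul_right _ (hc m (by omega))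
    nlinarith

def negacyclicShift (b m : ℕ) (d : ℕ → ℕ) : ℕ → ℕ
  | 0 => b - d (m + 1)
  | 1 => d 0 - 1
  | i + 2 => d (i + 1)

lemma base_mul_sum_eq_negacyclicShift (b m : ℕ) (d : ℕ → ℕ) (hd0 : 1 ≤ d 0)
    (htop : d (m + 1) ≤ b) :
    b * ∑ i ∈ range (m + 2), d i * b ^ i =
      d (m + 1) * (b ^ (m + 2) + 1) + ∑ i ∈ range (m + 2), negacyclicShift b m d i * b ^ i := by
  rw [sum_range_succ, sum_range_succ' (fun i => d i * b ^ i),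
    sum_range_succ' (fun i => negacyclicShift b m d i * b ^ i),
    sum_range_succ' (fun i => negacyclicShift b m d (i + 1) * b ^ (i + 1))]
  simp only [negacyclicShift]
  zify [hd0, htop]
  rw [mul_add, mul_add, mul_sum]
  have hshift : ∀ i ∈ range m,
      (b : ℤ) * (d (i + 1) * b ^ (i + 1)) = d (i + 1) * b ^ (i + 1 + 1) := fun i _ => by ring
  rw [sum_congr rfl hshift]
  ring

lemma base_mul_sum_mod_eq_negacyclicShift (b m : ℕ) (d : ℕ → ℕ) (hd0 : 1 ≤ d 0)
    (hd0b : d 0 ≤ b) (htop : 1 ≤ d (m + 1)) (htopb : d (m + 1) ≤ b)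
    (hd : ∀ i < m, d (i + 1) < b) :
    b * (∑ i ∈ range (m + 2), d i * b ^ i) % (b ^ (m + 2) + 1) =
      ∑ i ∈ range (m + 2), negacyclicShift b m d i * b ^ i := by
  have hlt : ∑ i ∈ range (m + 2), negacyclicShift b m d i * b ^ i < b ^ (m + 2) :=
    sum_digit_mul_pow_lt (m + 2) _ fun
      | 0, _ => by simp only [negacyclicShift]; omega
      | 1, _ => by simp only [negacyclicShift]; omega
      | i + 2, hi => hd i (by omega)
  rw [base_mul_sum_eq_negacyclicShift b m d hd0 htopb, Nat.mul_add_mod',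
    Nat.mod_eq_of_lt (by omega)]

theorem stmt_3_general (h : ℕ) (a : ℕ)
    (ha : ∃ d : ℕ → ℕ, (d 0 = 2 ∨ d 0 = 3) ∧
      (∀ i, 1 ≤ i → i ≤ h - 1 → d i = 1 ∨ d i = 2) ∧
      a = ∑ i ∈ Finset.range h, d i * 4 ^ i) :
    ∃ d : ℕ → ℕ, (d 0 = 2 ∨ d 0 = 3) ∧
      (∀ i, 1 ≤ i → i ≤ h - 1 → d i = 1 ∨ d i = 2) ∧
      (4 * a) % (4 ^ h + 1) = ∑ i ∈ Finset.range h, d i * 4 ^ i := by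
  obtain ⟨d, hd0, hd, rfl⟩ := ha
  match h, hd with
  | 0, _ => exact ⟨d, hd0, fun i hi hi' => by omega, by simp⟩
  | 1, _ =>
    exact ⟨fun _ => 5 - d 0, by dsimp only; omega, fun i hi hi' => by omega,
      by simp only [range_one, sum_singleton]; omega⟩
  | m + 2, hd =>
    have hmid : ∀ i < m + 1, d (i + 1) = 1 ∨ d (i + 1) = 2 :=
      fun i hi => hd (i + 1) (by omega) (by omega)
    have htop := hmid m (by omega)
    refine ⟨negacyclicShift 4 m d, by simp only [negacyclicShift]; omega, ?_, ?_⟩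
    · rintro (_ | _ | i) hi hi'
      · omega
      · simp only [negacyclicShift]; omega
      · exact hmid i (by omega)
    · exact base_mul_sum_mod_eq_negacyclicShift 4 m d (by omega) (by omega) (by omega) (by omega)
        fun i hi => by rcases hmid i (by omega) with hi | hi <;> omega

theorem stmt_3 (h : ℕ) (hh : 1 ≤ h) (a : ℕ)
    (ha : ∃ d : ℕ → ℕ, (d 0 = 2 ∨ d 0 = 3) ∧
      (∀ i, 1 ≤ i → i ≤ h - 1 → d i = 1 ∨ d i = 2) ∧
      a = ∑ i ∈ Finset.range h, d i * 4 ^ i) :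
    ∃ d : ℕ → ℕ, (d 0 = 2 ∨ d 0 = 3) ∧
      (∀ i, 1 ≤ i → i ≤ h - 1 → d i = 1 ∨ d i = 2) ∧
      (4 * a) % (4 ^ h + 1) = ∑ i ∈ Finset.range h, d i * 4 ^ i :=
  stmt_3_general h a ha
end

section
/- If a = Σ_{i=0}^{h-1} a_i 4^i with a_0 ∈ {2,3} and a_i ∈ {1,2} for 1 ≤ i ≤ h−1, and n = 4^h+1, then 4a mod n equals a_{h-2}4^{h-1}+⋯+a_1·4^2 + b_1·4 + b_0, where (b_1,b_0) = (1,3) if (a_0,a_{h-1})=(2,1); (1,2) if (a_0,a_{h-1})=(2,2); (2,3) if (a_0,a_{h-1})=(3,1); (2,2) if (a_0,a_{h-1})=(3,2). -/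
lemma sum_bound_aux (a : ℕ → ℕ) (k : ℕ) (ha : ∀ i < k, a (i + 1) ≤ 2) :
    (∑ i ∈ Finset.range k, a (i + 1) * 4 ^ (i + 2)) + 11 ≤ 4 ^ (k + 2) := by
  induction k with
  | zero => simp
  | succ k ih =>
    rw [Finset.sum_range_succ]
    have h1 := ih (fun i hi => ha i (by omega))
    have h2 : a (k + 1) ≤ 2 := ha k (by omega)
    have h3 : a (k + 1) * 4 ^ (k + 2) ≤ 2 * 4 ^ (k + 2) :=
      Nat.mul_le_mul_right _ h2
    have h4 : 4 ^ (k + 1 + 2) = 4 * 4 ^ (k + 2) := by ring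
    omega

theorem stmt_4 (h : ℕ) (hh : 2 ≤ h) (a : ℕ → ℕ)
    (h0 : a 0 = 2 ∨ a 0 = 3) (hi : ∀ i, 1 ≤ i → i ≤ h - 1 → a i = 1 ∨ a i = 2) :
    (4 * ∑ i ∈ Finset.range h, a i * 4 ^ i) % (4 ^ h + 1) =
      (∑ i ∈ Finset.range (h - 2), a (i + 1) * 4 ^ (i + 2)) +
        (if a 0 = 2 then 1 else 2) * 4 + (if a (h - 1) = 1 then 3 else 2) := by
  obtain ⟨k, rfl⟩ : ∃ k, h = k + 2 := ⟨h - 2, by omega⟩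
  simp only [show k + 2 - 2 = k from rfl, show k + 2 - 1 = k + 1 from rfl] at *
  have htop : a (k + 1) = 1 ∨ a (k + 1) = 2 := hi (k + 1) (by omega) (by omega)
  have ha2 : ∀ i < k, a (i + 1) ≤ 2 := by
    intro i hik
    rcases hi (i + 1) (by omega) (by omega) with h' | h' <;> omega
  have hb := sum_bound_aux a k ha2
  set S := ∑ i ∈ Finset.range k, a (i + 1) * 4 ^ (i + 2) with hS
  have key : 4 * ∑ i ∈ Finset.range (k + 2), a i * 4 ^ i
      = S + (if a 0 = 2 then 1 else 2) * 4 + (if a (k + 1) = 1 then 3 else 2)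
        + a (k + 1) * (4 ^ (k + 2) + 1) := by
    rw [Finset.sum_range_succ', Finset.sum_range_succ, mul_add, mul_add, Finset.mul_sum]
    have hc : ∀ i ∈ Finset.range k, 4 * (a (i + 1) * 4 ^ (i + 1)) = a (i + 1) * 4 ^ (i + 2) := by
      intro i _; ring
    rw [Finset.sum_congr rfl hc, ← hS]
    have hp : (4 : ℕ) ^ (k + 2) = 4 * 4 ^ (k + 1) := by ring
    rcases h0 with h' | h' <;> rcases htop with h'' | h'' <;>
      simp [h', h''] <;> rw [hp] <;> ring
  rw [key]
  have hlt : S + (if a 0 = 2 then 1 else 2) * 4 + (if a (k + 1) = 1 then 3 else 2)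
      < 4 ^ (k + 2) + 1 := by
    have : (if a 0 = 2 then 1 else 2) * 4 + (if a (k + 1) = 1 then 3 else 2) ≤ 11 := by
      split <;> split <;> omega
    omega
  rw [Nat.add_mul_mod_self_right, Nat.mod_eq_of_lt hlt]
end

section
/- The sets T = ⋃_{i=0}^{4^{h-1}} C_i^{(4)} and T^c = { Σ_{i=0}^{h-1} a_i 4^i : a_0 ∈ {2,3}, a_i ∈ {1,2} for 1 ≤ i ≤ h−1 } are disjoint and their union is Z_n = {0,1,…,n−1}, where n = 4^h+1. -/
/-!
Write `n = 4 ^ h + 1`, `h = m + 1`, and call `y < n` *middle* if `4 ^ m < y ≤ 3 * 4 ^ m`, i.e. if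
neither `y` nor `n - y ≡ y * 4 ^ h` is at most `4 ^ m`. Since `4 ^ (2 * h) ≡ 1`, multiplication by
`4` permutes each coset cyclically, so `x ∈ T` exactly when some `x * 4 ^ j mod n` is not middle.
Dually, `x ∈ Tᶜ` exactly when all of them are middle: `Tᶜ` consists of middle numbers and is
stable under `y ↦ 4 * y mod n`, which rotates its digits; conversely, if every `rⱼ = x * 4 ^ j mod n`
is middle, the base-4 digits `4 * rⱼ / n` of `x / n` are `1` or `2`, and because `r_h = n - x`
the first `h` of them are the digits of `x - 1`.
-/

open Finset

namespace Nat

theorem pow_two_mul_modEq_one (a k : ℕ) : a ^ (2 * k) ≡ 1 [MOD a ^ k + 1] :=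
  modEq_iff_dvd.2 ⟨1 - (a : ℤ) ^ k, by push_cast; ring⟩

theorem mul_pow_mod_pow_add_one {a k y : ℕ} (hy0 : 0 < y) (hy : y ≤ a ^ k + 1) :
    y * a ^ k % (a ^ k + 1) = a ^ k + 1 - y := by
  have hsplit : y * a ^ k = a ^ k + 1 - y + (a ^ k + 1) * (y - 1) := by
    zify [hy, hy0]; ring
  rw [hsplit, Nat.add_mul_mod_self_left, Nat.mod_eq_of_lt (by omega)]

theorem eq_mul_pow_mod_of_modEq {a k x y j : ℕ} (hk : 0 < k) (hx : x < a ^ k + 1)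
    (hy : y ≡ x * a ^ j [MOD a ^ k + 1]) : x = y * a ^ ((2 * k - 1) * j) % (a ^ k + 1) := by
  have hexp : j + (2 * k - 1) * j = 2 * k * j := by
    rw [← one_add_mul]; congr 1; omega
  have : y * a ^ ((2 * k - 1) * j) ≡ x [MOD a ^ k + 1] :=
    calc y * a ^ ((2 * k - 1) * j) ≡ x * a ^ j * a ^ ((2 * k - 1) * j) [MOD a ^ k + 1] :=
          hy.mul_right _
      _ = x * (a ^ (2 * k)) ^ j := by rw [mul_assoc, ← pow_add, hexp, pow_mul]
      _ ≡ x * 1 ^ j [MOD a ^ k + 1] := ((pow_two_mul_modEq_one a k).pow j).mul_left x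
      _ = x := by rw [one_pow, mul_one]
  rw [this, Nat.mod_eq_of_lt hx]

/-- Long division of `x / n` in base `b`: `b * (x * b ^ j % n) / n` is its `(j + 1)`-st digit. -/
theorem pow_mul_eq_mul_sum_add_mod (b n x M : ℕ) (hx : x < n) :
    b ^ M * x = n * ∑ i ∈ range M, b * (x * b ^ (M - 1 - i) % n) / n * b ^ i
      + x * b ^ M % n := by
  induction M with
  | zero => simp [Nat.mod_eq_of_lt hx]
  | succ M ih =>
    set r := x * b ^ M % n
    have hsum : ∑ i ∈ range (M + 1), b * (x * b ^ (M + 1 - 1 - i) % n) / n * b ^ i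
        = b * ∑ i ∈ range M, b * (x * b ^ (M - 1 - i) % n) / n * b ^ i + b * r / n := by
      rw [sum_range_succ', mul_sum]
      refine congrArg₂ _ (sum_congr rfl fun i hi => ?_) (by simp [r])
      rw [show M + 1 - 1 - (i + 1) = M - 1 - i by omega, pow_succ]; ring
    have hnext : b * r % n = x * b ^ (M + 1) % n := by
      rw [Nat.mul_mod_mod, pow_succ]; ring_nf
    calc b ^ (M + 1) * x = b * (b ^ M * x) := by ring
      _ = n * (b * ∑ i ∈ range M, b * (x * b ^ (M - 1 - i) % n) / n * b ^ i)
          + (n * (b * r / n) + b * r % n) := by rw [ih, Nat.div_add_mod]; ring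
      _ = _ := by rw [hsum, hnext]; ring

end Nat

namespace CyclotomicCoset

/-- `T m` and `Tc m` are the paper's `T` and `Tᶜ` for `h = m + 1`, so the modulus is
`n = 4 ^ (m + 1) + 1`. -/
def T (m : ℕ) : Set ℕ := {x | ∃ i ≤ 4 ^ m, ∃ j : ℕ, x = i * 4 ^ j % (4 ^ (m + 1) + 1)}

def Tc (m : ℕ) : Set ℕ := {a | ∃ d : ℕ → ℕ, (d 0 = 2 ∨ d 0 = 3) ∧
  (∀ i, 1 ≤ i → i ≤ m → d i = 1 ∨ d i = 2) ∧ a = ∑ i ∈ range (m + 1), d i * 4 ^ i}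

def Middle (m y : ℕ) : Prop := 4 ^ m < y ∧ y ≤ 3 * 4 ^ m

theorem mem_Tc_iff {m a : ℕ} : a ∈ Tc m ↔
    ∃ c : ℕ → ℕ, (∀ i ≤ m, c i = 1 ∨ c i = 2) ∧ a = ∑ i ∈ range (m + 1), c i * 4 ^ i + 1 := by
  constructor
  · rintro ⟨d, hd0, hd, rfl⟩
    refine ⟨Function.update d 0 (d 0 - 1), fun i hi => ?_, ?_⟩
    · rcases Nat.eq_zero_or_pos i with rfl | hpos
      · simp only [Function.update_self]; omega
      · simpa [hpos.ne'] using hd i hpos hi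
    · simp only [sum_range_succ' _ m, Function.update_self, ne_eq, Nat.succ_ne_zero,
        not_false_eq_true, Function.update_of_ne, pow_zero, mul_one]
      omega
  · rintro ⟨c, hc, rfl⟩
    refine ⟨Function.update c 0 (c 0 + 1), ?_, fun i hi1 hi => ?_, ?_⟩
    · have := hc 0 (Nat.zero_le m)
      simp only [Function.update_self]; omega
    · simpa [show i ≠ 0 by omega] using hc i hi
    · simp only [sum_range_succ' _ m, Function.update_self, ne_eq, Nat.succ_ne_zero,
        not_false_eq_true, Function.update_of_ne, pow_zero, mul_one]
      ring

theorem middle_of_mem_Tc {m a : ℕ} (ha : a ∈ Tc m) : Middle m a := by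
  obtain ⟨c, hc, rfl⟩ := mem_Tc_iff.1 ha
  have hgeom : (∑ i ∈ range (m + 1), 4 ^ i) * 3 + 1 = 4 * 4 ^ m := by
    have := geom_sum_mul_add 3 (m + 1); norm_num at this; rw [this, pow_succ, mul_comm]
  have htop : 4 ^ m ≤ ∑ i ∈ range (m + 1), 4 ^ i :=
    single_le_sum (f := (4 ^ ·)) (fun _ _ => Nat.zero_le _) (self_mem_range_succ m)
  have hlow : ∑ i ∈ range (m + 1), 4 ^ i ≤ ∑ i ∈ range (m + 1), c i * 4 ^ i :=
    sum_le_sum fun i hi => by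
      have := hc i (Nat.lt_succ_iff.1 (mem_range.1 hi))
      simpa using Nat.mul_le_mul_right (4 ^ i) (show 1 ≤ c i by omega)
  have hhigh : ∑ i ∈ range (m + 1), c i * 4 ^ i ≤ 2 * ∑ i ∈ range (m + 1), 4 ^ i := by
    rw [mul_sum]
    exact sum_le_sum fun i hi => by
      have := hc i (Nat.lt_succ_iff.1 (mem_range.1 hi))
      exact Nat.mul_le_mul_right (4 ^ i) (show c i ≤ 2 by omega)
  constructor <;> omega

theorem Tc_subset_Iio (m : ℕ) : Tc m ⊆ Set.Iio (4 ^ (m + 1) + 1) := fun a ha => by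
  have := (middle_of_mem_Tc ha).2
  rw [Set.mem_Iio, pow_succ]; omega

/-- Multiplication by `4` rotates the digits `cᵢ` of `a = 1 + ∑ cᵢ 4ⁱ` one place up, replacing
the top digit `c` by `3 - c` at the bottom, because `4 ^ (m + 1) ≡ -1`. -/
theorem four_mul_mod_mem_Tc {m a : ℕ} (ha : a ∈ Tc m) : 4 * a % (4 ^ (m + 1) + 1) ∈ Tc m := by
  obtain ⟨c, hc, rfl⟩ := mem_Tc_iff.1 ha
  set c' : ℕ → ℕ := fun i => if i = 0 then 3 - c m else c (i - 1)
  have hc' : ∀ i ≤ m, c' i = 1 ∨ c' i = 2 := fun i hi => by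
    rcases i with _ | i
    · have := hc m le_rfl; show 3 - c m = 1 ∨ 3 - c m = 2; omega
    · exact hc i (by omega)
  have hmem : ∑ i ∈ range (m + 1), c' i * 4 ^ i + 1 ∈ Tc m := mem_Tc_iff.2 ⟨c', hc', rfl⟩
  have hrot : 4 * (∑ i ∈ range (m + 1), c i * 4 ^ i + 1)
      = ∑ i ∈ range (m + 1), c' i * 4 ^ i + 1 + (4 ^ (m + 1) + 1) * c m := by
    have := hc m le_rfl
    rw [sum_range_succ, sum_range_succ']
    simp only [c', if_pos, Nat.succ_ne_zero, if_false, Nat.add_sub_cancel, pow_zero, mul_one,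
      mul_add, mul_sum]
    rw [pow_succ]
    have hshift : ∑ i ∈ range m, 4 * (c i * 4 ^ i) = ∑ i ∈ range m, c i * 4 ^ (i + 1) :=
      sum_congr rfl fun i _ => by ring
    rw [hshift]
    rcases this with h | h <;> rw [h] <;> ring
  rw [hrot, Nat.add_mul_mod_self_left, Nat.mod_eq_of_lt (Tc_subset_Iio m hmem)]
  exact hmem

theorem mul_pow_mod_mem_Tc {m a : ℕ} (ha : a ∈ Tc m) (j : ℕ) :
    a * 4 ^ j % (4 ^ (m + 1) + 1) ∈ Tc m := by
  induction j with
  | zero => rwa [pow_zero, mul_one, Nat.mod_eq_of_lt (Tc_subset_Iio m ha)]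
  | succ j ih =>
    have := four_mul_mod_mem_Tc ih
    rwa [Nat.mul_mod_mod, show 4 * (a * 4 ^ j) = a * 4 ^ (j + 1) by ring] at this

theorem digit_eq_one_or_two_of_middle {m r : ℕ} (hr : Middle m r) :
    4 * r / (4 ^ (m + 1) + 1) = 1 ∨ 4 * r / (4 ^ (m + 1) + 1) = 2 := by
  obtain ⟨hlo, hhi⟩ := hr
  have hn : 0 < 4 ^ (m + 1) + 1 := by positivity
  have h1 : 1 ≤ 4 * r / (4 ^ (m + 1) + 1) := (Nat.le_div_iff_mul_le hn).2 (by rw [pow_succ]; omega)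
  have h3 : 4 * r / (4 ^ (m + 1) + 1) < 3 := (Nat.div_lt_iff_lt_mul hn).2 (by rw [pow_succ]; omega)
  omega

theorem mem_Tc_of_forall_middle {m x : ℕ} (hx : x < 4 ^ (m + 1) + 1)
    (hmid : ∀ j, Middle m (x * 4 ^ j % (4 ^ (m + 1) + 1))) : x ∈ Tc m := by
  have hx0 : 0 < x := by
    have := (hmid 0).1
    rw [pow_zero, mul_one, Nat.mod_eq_of_lt hx] at this
    omega
  have htel := Nat.pow_mul_eq_mul_sum_add_mod 4 (4 ^ (m + 1) + 1) x (m + 1) hx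
  rw [Nat.mul_pow_mod_pow_add_one hx0 hx.le] at htel
  refine mem_Tc_iff.2 ⟨_, fun i _ => digit_eq_one_or_two_of_middle (hmid (m + 1 - 1 - i)),
    Nat.eq_of_mul_eq_mul_left (Nat.succ_pos (4 ^ (m + 1))) ?_⟩
  zify [hx.le] at htel ⊢
  linear_combination htel

theorem mem_Tc_iff_forall_middle {m x : ℕ} (hx : x < 4 ^ (m + 1) + 1) :
    x ∈ Tc m ↔ ∀ j, Middle m (x * 4 ^ j % (4 ^ (m + 1) + 1)) :=
  ⟨fun hxTc j => middle_of_mem_Tc (mul_pow_mod_mem_Tc hxTc j), mem_Tc_of_forall_middle hx⟩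

theorem T_subset_Iio (m : ℕ) : T m ⊆ Set.Iio (4 ^ (m + 1) + 1) := by
  rintro _ ⟨i, -, j, rfl⟩
  exact Nat.mod_lt _ (by positivity)

theorem mem_T_of_modEq {m x y j : ℕ} (hx : x < 4 ^ (m + 1) + 1) (hy : y ≤ 4 ^ m)
    (hxy : y ≡ x * 4 ^ j [MOD 4 ^ (m + 1) + 1]) : x ∈ T m :=
  ⟨y, hy, _, Nat.eq_mul_pow_mod_of_modEq m.succ_pos hx hxy⟩

theorem exists_not_middle_of_mem_T {m x : ℕ} (hx : x ∈ T m) :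
    ∃ j, ¬ Middle m (x * 4 ^ j % (4 ^ (m + 1) + 1)) := by
  obtain ⟨i, hi, j, rfl⟩ := hx
  have hin : i < 4 ^ (m + 1) + 1 := by rw [pow_succ]; omega
  refine ⟨(2 * (m + 1) - 1) * j, ?_⟩
  rw [← Nat.eq_mul_pow_mod_of_modEq m.succ_pos hin (Nat.mod_modEq _ _)]
  exact fun hmid => absurd hmid.1 (by omega)

theorem mem_T_of_not_middle {m x j : ℕ} (hx : x < 4 ^ (m + 1) + 1)
    (hj : ¬ Middle m (x * 4 ^ j % (4 ^ (m + 1) + 1))) : x ∈ T m := by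
  set r := x * 4 ^ j % (4 ^ (m + 1) + 1)
  have hr : r ≡ x * 4 ^ j [MOD 4 ^ (m + 1) + 1] := Nat.mod_modEq _ _
  rcases le_or_gt r (4 ^ m) with hlo | hhi
  · exact mem_T_of_modEq hx hlo hr
  -- `r` is large, so `-r ≡ r * 4 ^ (m + 1)` is small
  have hr3 : 3 * 4 ^ m < r := by
    by_contra hle
    exact hj ⟨hhi, by omega⟩
  have hrn : r < 4 ^ (m + 1) + 1 := Nat.mod_lt _ (by positivity)
  refine mem_T_of_modEq (y := 4 ^ (m + 1) + 1 - r) (j := j + (m + 1)) hx ?_ ?_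
  · rw [pow_succ] at hrn ⊢; omega
  · rw [← Nat.mul_pow_mod_pow_add_one (by omega) hrn.le]
    calc r * 4 ^ (m + 1) % (4 ^ (m + 1) + 1) ≡ r * 4 ^ (m + 1) [MOD 4 ^ (m + 1) + 1] :=
          Nat.mod_modEq _ _
      _ ≡ x * 4 ^ j * 4 ^ (m + 1) [MOD 4 ^ (m + 1) + 1] := hr.mul_right _
      _ = x * 4 ^ (j + (m + 1)) := by ring

theorem mem_T_iff_exists_not_middle {m x : ℕ} (hx : x < 4 ^ (m + 1) + 1) :
    x ∈ T m ↔ ∃ j, ¬ Middle m (x * 4 ^ j % (4 ^ (m + 1) + 1)) :=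
  ⟨exists_not_middle_of_mem_T, fun ⟨_, hj⟩ => mem_T_of_not_middle hx hj⟩

end CyclotomicCoset

open CyclotomicCoset in
theorem stmt_6 (h : ℕ) (hh : 1 ≤ h) :
    let n := 4 ^ h + 1
    let T : Set ℕ := {x | ∃ i ≤ 4 ^ (h - 1), ∃ j : ℕ, x = (i * 4 ^ j) % n}
    let Tc : Set ℕ := {a | ∃ d : ℕ → ℕ, (d 0 = 2 ∨ d 0 = 3) ∧
      (∀ i, 1 ≤ i → i ≤ h - 1 → d i = 1 ∨ d i = 2) ∧
      a = ∑ i ∈ Finset.range h, d i * 4 ^ i}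
    Disjoint T Tc ∧ T ∪ Tc = Set.Iio n := by
  obtain ⟨m, rfl⟩ : ∃ m, h = m + 1 := ⟨h - 1, by omega⟩
  show Disjoint (T m) (Tc m) ∧ T m ∪ Tc m = Set.Iio (4 ^ (m + 1) + 1)
  refine ⟨Set.disjoint_left.2 fun x hxT hxTc => ?_, ?_⟩
  · obtain ⟨j, hj⟩ := exists_not_middle_of_mem_T hxT
    exact hj ((mem_Tc_iff_forall_middle (Tc_subset_Iio m hxTc)).1 hxTc j)
  · refine (Set.union_subset (T_subset_Iio m) (Tc_subset_Iio m)).antisymm fun x hx => ?_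
    rw [Set.mem_union, mem_T_iff_exists_not_middle hx, mem_Tc_iff_forall_middle hx]
    exact or_iff_not_imp_right.2 not_forall.1
end

section
/- Let a = Σ_{i=0}^{h-1} a_i 4^i with 0 ≤ a_i ≤ 3, a_{h-1} ∈ {1,2}, and a_0 = 1, and suppose (4^h+2)/3 ≤ a ≤ (2·4^h+1)/3. Then a·4^{h-1} mod (4^h+1) = 4^{h-1} − (a−1)/4, which is at most (2·4^h+1)/12 and hence less than (4^h−1)/3. -/
/-!
Since `a₀ = 1`, `a = 4b + 1` with `b = (a - 1) / 4`. With `P = 4^(h-1)` this gives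
`a P = b (4P + 1) + (P - b)`, so the residue is `P - b` as soon as `b ≤ P`. That, and the two
inequalities, are linear consequences of the bounds on `a = 4b + 1`, whose floor divisions are
exact up to a known remainder because `P ≡ 1 (mod 3)`.
-/

theorem Nat.sum_range_mul_pow_mod_self {B n : ℕ} (hn : 0 < n) (d : ℕ → ℕ) :
    (∑ i ∈ Finset.range n, d i * B ^ i) % B = d 0 % B := by
  obtain ⟨n, rfl⟩ := Nat.exists_eq_add_of_lt hn
  have hdvd : B ∣ ∑ i ∈ Finset.range n, d (i + 1) * B ^ (i + 1) :=
    Finset.dvd_sum fun i _ => Dvd.dvd.mul_left (dvd_pow_self B i.succ_ne_zero) _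
  rw [zero_add, Finset.sum_range_succ', pow_zero, mul_one, Nat.add_mod,
    Nat.mod_eq_zero_of_dvd hdvd, zero_add, Nat.mod_mod]

theorem Nat.mul_add_one_mul_mod {k b P : ℕ} (hk : 0 < k) (hb : b ≤ P) :
    (k * b + 1) * P % (k * P + 1) = P - b := by
  obtain ⟨c, rfl⟩ := Nat.exists_eq_add_of_le hb
  have hexp : (k * b + 1) * (b + c) = (k * (b + c) + 1) * b + c := by ring
  rw [hexp, Nat.mul_add_mod, Nat.mod_eq_of_lt (by nlinarith), Nat.add_sub_cancel_left]

theorem stmt_7_general (h : ℕ) (d : ℕ → ℕ) (h0 : d 0 = 1)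
    (a : ℕ) (ha : a = ∑ i ∈ Finset.range h, d i * 4 ^ i)
    (hmin : (4 ^ h + 2) / 3 ≤ a) (hmax : a ≤ (2 * 4 ^ h + 1) / 3) :
    (a * 4 ^ (h - 1)) % (4 ^ h + 1) = 4 ^ (h - 1) - (a - 1) / 4 ∧
      12 * (4 ^ (h - 1) - (a - 1) / 4) ≤ 2 * 4 ^ h + 1 ∧
      (a * 4 ^ (h - 1)) % (4 ^ h + 1) < (4 ^ h - 1) / 3 := by
  obtain ⟨n, rfl⟩ : ∃ n, h = n + 1 := Nat.exists_eq_succ_of_ne_zero (by rintro rfl; simp_all)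
  have ha_mod : a % 4 = 1 := by
    rw [ha, Nat.sum_range_mul_pow_mod_self n.succ_pos, h0]
  obtain ⟨b, hab⟩ : ∃ b, a = 4 * b + 1 := ⟨(a - 1) / 4, by omega⟩
  have hb : (a - 1) / 4 = b := by omega
  simp only [hb, Nat.add_sub_cancel, pow_succ'] at hmin hmax ⊢
  have hP_mod : 4 ^ n % 3 = 1 := by rw [Nat.pow_mod]; simp
  generalize 4 ^ n = P at hP_mod hmin hmax ⊢
  have hrem : a * P % (4 * P + 1) = P - b := by
    rw [hab, Nat.mul_add_one_mul_mod four_pos (by omega)]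
  rw [hrem]
  omega

theorem stmt_7 (h : ℕ) (hh : 3 ≤ h) (d : ℕ → ℕ)
    (hd : ∀ i, i ≤ h - 1 → d i ≤ 3) (h0 : d 0 = 1)
    (hl : d (h - 1) = 1 ∨ d (h - 1) = 2)
    (a : ℕ) (ha : a = ∑ i ∈ Finset.range h, d i * 4 ^ i)
    (hmin : (4 ^ h + 2) / 3 ≤ a) (hmax : a ≤ (2 * 4 ^ h + 1) / 3) :
    (a * 4 ^ (h - 1)) % (4 ^ h + 1) = 4 ^ (h - 1) - (a - 1) / 4 ∧
      12 * (4 ^ (h - 1) - (a - 1) / 4) ≤ 2 * 4 ^ h + 1 ∧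
      (a * 4 ^ (h - 1)) % (4 ^ h + 1) < (4 ^ h - 1) / 3 :=
  stmt_7_general h d h0 a ha hmin hmax
end

section
/- Every integer a with (4^h+2)/3 ≤ a ≤ (2·4^h+1)/3 belongs to either T or T^c, where T = ⋃_{i=0}^{4^{h-1}} C_i^{(4)} and T^c is the set of integers with base-4 digits a_0 ∈ {2,3} and a_i ∈ {1,2} for 1 ≤ i ≤ h−1. -/
/-!
Work in `ZMod (4 ^ h + 1)`, where `4 ^ h = -1`, so each coset is closed under negation. Write the
base-4 digits of `a < 4 ^ h` as `a₀, …, a_{h-1}`. If `a₀ = 0` then `a = 4 · (a / 4)`. If the block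
`a mod 4^(k+1)` lies in `(0, 4^k]` (this covers `a₀ = 1`, and `a_k = 0` when `a₀ ≠ 0`), then
`a = 4^(k+1) v + u` and `-a = (u 4^(h-k-1) - v) 4^(k+1)`. If it lies in `(3·4^k, 4^(k+1))` (this covers
`a_k = 3` when `a₀ ≠ 0`), then `a = 4^(k+1) v - u` and `a = (u 4^(h-k-1) + v) 4^(k+1)`. In all these
cases the cofactor is at most `4^(h-1)`; what remains is exactly `Tᶜ`.
-/

open Finset

lemma Nat.mod_pow_eq_sum_div_pow_mod (b m a : ℕ) :
    a % b ^ m = ∑ i ∈ range m, a / b ^ i % b * b ^ i := by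
  induction m with
  | zero => simp [Nat.mod_one]
  | succ m ih => rw [sum_range_succ, ← ih, Nat.mod_pow_succ, mul_comm]

lemma ZMod.four_pow_eq_neg_one (h : ℕ) : (4 : ZMod (4 ^ h + 1)) ^ h = -1 := by
  have h0 : ((4 ^ h + 1 : ℕ) : ZMod (4 ^ h + 1)) = 0 := ZMod.natCast_self _
  push_cast at h0
  exact eq_neg_of_add_eq_zero_left h0

/-- The union `T` of the cosets `C_i^{(4)}`, `i ≤ 4^(h-1)`, as a subset of `ZMod (4 ^ h + 1)`. -/
def MemCosetUnion (h : ℕ) (r : ZMod (4 ^ h + 1)) : Prop :=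
  ∃ i : ℕ, i ≤ 4 ^ (h - 1) ∧ ∃ j : ℕ, r = i * 4 ^ j

namespace MemCosetUnion

lemma neg {h : ℕ} {r : ZMod (4 ^ h + 1)} (hr : MemCosetUnion h r) : MemCosetUnion h (-r) := by
  obtain ⟨i, hi, j, rfl⟩ := hr
  exact ⟨i, hi, j + h, by rw [pow_add, ZMod.four_pow_eq_neg_one]; ring⟩

lemma of_add_eq_mul (k q a u v : ℕ) (hu : u < 4 ^ k) (hv : v ≤ 4 ^ q)
    (hsum : a + u = 4 ^ (k + 1) * v) : MemCosetUnion (k + 1 + q) a := by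
  refine ⟨u * 4 ^ q + v, ?_, k + 1, ?_⟩
  · rw [show k + 1 + q - 1 = k + q by omega, pow_add]
    nlinarith
  · have h4 : (4 : ZMod (4 ^ (k + 1 + q) + 1)) ^ (k + 1) * 4 ^ q = -1 := by
      rw [← pow_add, ZMod.four_pow_eq_neg_one]
    have hc := congrArg (Nat.cast : ℕ → ZMod (4 ^ (k + 1 + q) + 1)) hsum
    push_cast at hc ⊢
    linear_combination hc - (u : ZMod (4 ^ (k + 1 + q) + 1)) * h4

lemma of_eq_mul_add (k q a u v : ℕ) (hu₀ : 0 < u) (hu : u ≤ 4 ^ k) (hv : v < 4 ^ q)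
    (hsum : a = 4 ^ (k + 1) * v + u) : MemCosetUnion (k + 1 + q) a := by
  have hvu : v ≤ u * 4 ^ q := by nlinarith
  rw [← neg_neg (a : ZMod (4 ^ (k + 1 + q) + 1))]
  refine neg ⟨u * 4 ^ q - v, ?_, k + 1, ?_⟩
  · rw [show k + 1 + q - 1 = k + q by omega, pow_add]
    have := Nat.mul_le_mul_right (4 ^ q) hu
    omega
  · have h4 : (4 : ZMod (4 ^ (k + 1 + q) + 1)) ^ (k + 1) * 4 ^ q = -1 := by
      rw [← pow_add, ZMod.four_pow_eq_neg_one]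
    have hc := congrArg (Nat.cast : ℕ → ZMod (4 ^ (k + 1 + q) + 1)) hsum
    push_cast [hvu] at hc ⊢
    linear_combination -hc - (u : ZMod (4 ^ (k + 1 + q) + 1)) * h4

lemma of_mod_four_eq_zero {h a : ℕ} (ha : a < 4 ^ h) (h0 : a % 4 = 0) : MemCosetUnion h a := by
  refine ⟨a / 4, ?_, 1, ?_⟩
  · cases h with
    | zero => simp at ha; simp [ha]
    | succ h => rw [pow_succ] at ha; simp; omega
  · rw [pow_one]
    exact_mod_cast congrArg (Nat.cast : ℕ → ZMod (4 ^ h + 1))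
      (Nat.div_mul_cancel (Nat.dvd_of_mod_eq_zero h0)).symm

lemma of_lt_mod_pow {h k a : ℕ} (hk : k < h) (ha : a < 4 ^ h)
    (hlt : 3 * 4 ^ k < a % 4 ^ (k + 1)) : MemCosetUnion h a := by
  obtain ⟨q, rfl⟩ : ∃ q, h = k + 1 + q := ⟨h - k - 1, by omega⟩
  have hdiv : a / 4 ^ (k + 1) < 4 ^ q := Nat.div_lt_of_lt_mul (by rwa [← pow_add])
  have hmod : a % 4 ^ (k + 1) < 4 ^ (k + 1) := Nat.mod_lt _ (by positivity)
  have hda := Nat.div_add_mod a (4 ^ (k + 1))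
  refine of_add_eq_mul k q a (4 ^ (k + 1) - a % 4 ^ (k + 1)) (a / 4 ^ (k + 1) + 1) ?_ hdiv ?_
  · rw [pow_succ] at hmod hlt ⊢
    omega
  · rw [mul_add_one]
    omega

lemma of_mod_pow_le {h k a : ℕ} (hk : k < h) (ha : a < 4 ^ h)
    (hpos : 0 < a % 4 ^ (k + 1)) (hle : a % 4 ^ (k + 1) ≤ 4 ^ k) : MemCosetUnion h a := by
  obtain ⟨q, rfl⟩ : ∃ q, h = k + 1 + q := ⟨h - k - 1, by omega⟩
  have hdiv : a / 4 ^ (k + 1) < 4 ^ q := Nat.div_lt_of_lt_mul (by rwa [← pow_add])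
  exact of_eq_mul_add k q a _ _ hpos hle hdiv (Nat.div_add_mod a _).symm

lemma exists_eq_mul_pow_mod {h a : ℕ} (hT : MemCosetUnion h a) (ha : a < 4 ^ h + 1) :
    ∃ i ≤ 4 ^ (h - 1), ∃ j : ℕ, a = (i * 4 ^ j) % (4 ^ h + 1) := by
  obtain ⟨i, hi, j, hij⟩ := hT
  refine ⟨i, hi, j, ?_⟩
  rw [← Nat.mod_eq_of_lt ha]
  exact (ZMod.natCast_eq_natCast_iff' _ _ _).1 (by push_cast; exact hij)

end MemCosetUnion

lemma Nat.mod_pow_pos_of_mod_pos {a b k : ℕ} (hk : k ≠ 0) (ha : 0 < a % b) : 0 < a % b ^ k := by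
  have hmod := Nat.mod_mod_of_dvd a (dvd_pow_self b hk)
  refine Nat.pos_of_ne_zero fun h0 => ?_
  rw [h0, Nat.zero_mod] at hmod
  omega

lemma memCosetUnion_or_digits {h a : ℕ} (ha : a < 4 ^ h) :
    MemCosetUnion h a ∨ (a % 4 = 2 ∨ a % 4 = 3) ∧
      ∀ k, 1 ≤ k → k ≤ h - 1 → a / 4 ^ k % 4 = 1 ∨ a / 4 ^ k % 4 = 2 := by
  rcases (by omega : a % 4 = 0 ∨ a % 4 = 1 ∨ 2 ≤ a % 4) with h0 | h1 | h2
  · exact Or.inl (.of_mod_four_eq_zero ha h0)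
  · have hh : 0 < h := Nat.pos_of_ne_zero (by rintro rfl; simp at ha; omega)
    exact Or.inl (.of_mod_pow_le (k := 0) hh ha (by simp; omega) (by simp; omega))
  refine or_iff_not_imp_left.2 fun hT => ⟨by omega, fun k hk1 hkh => ?_⟩
  have hlow := Nat.mod_pow_pos_of_mod_pos (k := k) (by omega) (by omega : 0 < a % 4)
  have hlt := Nat.mod_lt a (by positivity : 0 < 4 ^ k)
  have hsplit := Nat.mod_pow_succ (x := a) (b := 4) (k := k)
  have hdigit := Nat.mod_lt (a / 4 ^ k) (by norm_num : 0 < 4)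
  have h3 : a / 4 ^ k % 4 ≠ 3 := fun hk =>
    hT (.of_lt_mod_pow (k := k) (by omega) ha (by rw [hsplit, hk]; omega))
  have h0 : a / 4 ^ k % 4 ≠ 0 := fun hk =>
    hT (.of_mod_pow_le (k := k) (by omega) ha (by rw [hsplit, hk]; omega)
      (by rw [hsplit, hk]; omega))
  omega

theorem stmt_9_general (h : ℕ) (a : ℕ)
    (hmax : a ≤ (2 * 4 ^ h + 1) / 3) :
    (∃ i ≤ 4 ^ (h - 1), ∃ j : ℕ, a = (i * 4 ^ j) % (4 ^ h + 1)) ∨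
      (∃ d : ℕ → ℕ, (d 0 = 2 ∨ d 0 = 3) ∧
        (∀ i, 1 ≤ i → i ≤ h - 1 → d i = 1 ∨ d i = 2) ∧
        a = ∑ i ∈ Finset.range h, d i * 4 ^ i) := by
  rcases (show a ≤ 4 ^ h by omega).lt_or_eq with ha | rfl
  · rcases memCosetUnion_or_digits ha with hT | ⟨hd0, hdigits⟩
    · exact Or.inl (hT.exists_eq_mul_pow_mod (by omega))
    · refine Or.inr ⟨fun i => a / 4 ^ i % 4, by simpa using hd0, hdigits, ?_⟩
      rw [← Nat.mod_pow_eq_sum_div_pow_mod, Nat.mod_eq_of_lt ha]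
  · exact Or.inl ⟨1, Nat.one_le_pow _ _ (by norm_num), h, by simp⟩

theorem stmt_9 (h : ℕ) (hh : 1 ≤ h) (a : ℕ)
    (hmin : (4 ^ h + 2) / 3 ≤ a) (hmax : a ≤ (2 * 4 ^ h + 1) / 3) :
    (∃ i ≤ 4 ^ (h - 1), ∃ j : ℕ, a = (i * 4 ^ j) % (4 ^ h + 1)) ∨
      (∃ d : ℕ → ℕ, (d 0 = 2 ∨ d 0 = 3) ∧
        (∀ i, 1 ≤ i → i ≤ h - 1 → d i = 1 ∨ d i = 2) ∧
        a = ∑ i ∈ Finset.range h, d i * 4 ^ i) :=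
  stmt_9_general h a hmax
end

section
/- Let q = 4^h, w = Σ_{i=0}^{2h-1} 2·4^i = 2(q^2−1)/3 and e = 1 + Σ_{i=0}^{h-1} e_i 4^i with each e_i ∈ {1,2}. Then in GF(2)[x], x^{q^2−1−qe}(x+1)^{w+(q−1)e−q^2+1} = Σ x^{Σ_{i=0}^{h-1} v_i 4^i + Σ_{i=0}^{h-1}(3−e_i+v_{i+h})4^{h+i} − 1}, where the sum ranges over all tuples with 0 ≤ v_i ≤ 2−e_i and 0 ≤ v_{i+h} ≤ e_i−1 for 0 ≤ i ≤ h−1. -/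
/-!
Over `𝔽₂` one has `(x + 1) ^ 4 ^ i = x ^ 4 ^ i + 1`. Writing `P = ∑_{i<h} 4^i`, so that
`q = 3P + 1`, the exponent of `x + 1` equals `∑ (2 - e_i) 4^i + ∑ (e_i - 1) 4^(h+i)`, a base-4
number all of whose digits are `0` or `1`; hence `(x + 1)` to that power is the product of the
factors `x ^ 4 ^ j + 1` over the nonzero digits, and expanding it gives one monomial for each choice
of sub-digits `v`. The exponent of `x` is `∑ (3 - e_i) 4^(h+i) - 1`, which shifts every monomial.
-/

open Finset

section AddOnePow

variable {R : Type*} [CommSemiring R] {x : R}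

theorem add_one_pow_four_pow [CharP R 2] (k : ℕ) : (x + 1) ^ 4 ^ k = x ^ 4 ^ k + 1 := by
  rw [show 4 ^ k = 2 ^ (2 * k) by rw [pow_mul]; norm_num, add_pow_char_pow, one_pow]

theorem add_one_pow_mul_eq_sum {m a : ℕ} (hm : (x + 1) ^ m = x ^ m + 1) (ha : a ≤ 1) :
    (x + 1) ^ (a * m) = ∑ j ∈ univ.filter (fun j : Fin 2 => (j : ℕ) ≤ a), x ^ ((j : ℕ) * m) := by
  interval_cases a
  · simp [sum_filter]
  · simp [sum_filter, Fin.sum_univ_two, hm, add_comm]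

theorem add_one_pow_mul_add_mul_eq_sum {m n a b : ℕ} (hm : (x + 1) ^ m = x ^ m + 1)
    (hn : (x + 1) ^ n = x ^ n + 1) (ha : a ≤ 1) (hb : b ≤ 1) :
    (x + 1) ^ (a * m + b * n) = ∑ p ∈ univ.filter (fun p : Fin 2 × Fin 2 =>
      (p.1 : ℕ) ≤ a ∧ (p.2 : ℕ) ≤ b), x ^ ((p.1 : ℕ) * m + (p.2 : ℕ) * n) := by
  rw [pow_add, add_one_pow_mul_eq_sum hm ha, add_one_pow_mul_eq_sum hn hb, sum_mul_sum,
    ← univ_product_univ, filter_product (fun j : Fin 2 => (j : ℕ) ≤ a) (fun j : Fin 2 => (j : ℕ) ≤ b),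
    sum_product]
  simp only [pow_add]

theorem add_one_pow_sum_eq_sum {ι : Type*} [Fintype ι] [DecidableEq ι] {m n a b : ι → ℕ}
    (hm : ∀ i, (x + 1) ^ m i = x ^ m i + 1) (hn : ∀ i, (x + 1) ^ n i = x ^ n i + 1)
    (ha : ∀ i, a i ≤ 1) (hb : ∀ i, b i ≤ 1) :
    (x + 1) ^ (∑ i, (a i * m i + b i * n i)) =
      ∑ v ∈ univ.filter (fun v : ι → Fin 2 × Fin 2 => ∀ i, ((v i).1 : ℕ) ≤ a i ∧ ((v i).2 : ℕ) ≤ b i),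
        x ^ (∑ i, (((v i).1 : ℕ) * m i + ((v i).2 : ℕ) * n i)) := by
  have hpi : Fintype.piFinset (fun i => univ.filter (fun p : Fin 2 × Fin 2 =>
      (p.1 : ℕ) ≤ a i ∧ (p.2 : ℕ) ≤ b i)) =
      univ.filter (fun v : ι → Fin 2 × Fin 2 => ∀ i, ((v i).1 : ℕ) ≤ a i ∧ ((v i).2 : ℕ) ≤ b i) := by
    ext v; simp [Fintype.mem_piFinset]
  simp_rw [← prod_pow_eq_pow_sum, add_one_pow_mul_add_mul_eq_sum (hm _) (hn _) (ha _) (hb _),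
    prod_univ_sum, hpi]

end AddOnePow

theorem sum_tsub_mul_add_sum_mul {ι : Type*} (s : Finset ι) {f g w : ι → ℕ}
    (hgf : ∀ i ∈ s, g i ≤ f i) :
    ∑ i ∈ s, (f i - g i) * w i + ∑ i ∈ s, g i * w i = ∑ i ∈ s, f i * w i := by
  rw [← sum_add_distrib]
  exact sum_congr rfl fun i hi => by rw [← add_mul, tsub_add_cancel_of_le (hgf i hi)]

theorem sum_mul_pow_add {ι : Type*} (s : Finset ι) (f k : ι → ℕ) (b n : ℕ) :
    ∑ i ∈ s, f i * b ^ (n + k i) = b ^ n * ∑ i ∈ s, f i * b ^ k i := by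
  rw [mul_sum]
  exact sum_congr rfl fun i _ => by rw [pow_add]; ring

theorem three_mul_sum_four_pow_add_one (h : ℕ) : 3 * ∑ i : Fin h, 4 ^ (i : ℕ) + 1 = 4 ^ h := by
  rw [Fin.sum_univ_eq_sum_range (4 ^ ·), mul_comm]
  have := geom_sum_mul_add 3 h
  norm_num at this
  exact this

section Exponents

variable {h : ℕ} {e : Fin h → ℕ}

theorem sum_tsub_mul_four_pow_add_sum {c : ℕ} (he : ∀ i, e i ≤ c) :
    ∑ i : Fin h, (c - e i) * 4 ^ (i : ℕ) + ∑ i : Fin h, e i * 4 ^ (i : ℕ) =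
      c * ∑ i : Fin h, 4 ^ (i : ℕ) := by
  rw [sum_tsub_mul_add_sum_mul _ fun i _ => he i, mul_sum]

theorem exponent_X_eq_sum (he : ∀ i, e i ≤ 3) :
    (4 ^ h) ^ 2 - 1 - 4 ^ h * (1 + ∑ i : Fin h, e i * 4 ^ (i : ℕ)) =
      ∑ i : Fin h, (3 - e i) * 4 ^ (h + (i : ℕ)) - 1 := by
  have hq := three_mul_sum_four_pow_add_one h
  have hD := sum_tsub_mul_four_pow_add_sum he
  rw [sum_mul_pow_add univ (3 - e ·) (fun i : Fin h => (i : ℕ))]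
  generalize 4 ^ h = q at *
  generalize ∑ i : Fin h, 4 ^ (i : ℕ) = P at *
  generalize ∑ i : Fin h, e i * 4 ^ (i : ℕ) = E at *
  generalize ∑ i : Fin h, (3 - e i) * 4 ^ (i : ℕ) = D at *
  have hqD : q * D + q * E = 3 * (q * P) := by rw [← mul_add, hD]; ring
  have hqq : q * q = 3 * (q * P) + q := by nth_rw 2 [← hq]; ring
  rw [sq, hqq, mul_add]
  omega

theorem exponent_X_add_one_eq_sum (he₁ : ∀ i, 1 ≤ e i) (he₂ : ∀ i, e i ≤ 2) :
    2 * ((4 ^ h) ^ 2 - 1) / 3 + (4 ^ h - 1) * (1 + ∑ i : Fin h, e i * 4 ^ (i : ℕ)) -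
        ((4 ^ h) ^ 2 - 1) =
      ∑ i : Fin h, ((2 - e i) * 4 ^ (i : ℕ) + (e i - 1) * 4 ^ (h + (i : ℕ))) := by
  have hq := three_mul_sum_four_pow_add_one h
  have hT := sum_tsub_mul_four_pow_add_sum he₂
  have hD := sum_tsub_mul_add_sum_mul univ (w := (4 ^ ·.val)) fun i _ => he₁ i
  simp only [one_mul] at hD
  rw [sum_add_distrib, sum_mul_pow_add univ (e · - 1) (fun i : Fin h => (i : ℕ))]
  generalize 4 ^ h = q at *
  generalize ∑ i : Fin h, 4 ^ (i : ℕ) = P at *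
  generalize ∑ i : Fin h, e i * 4 ^ (i : ℕ) = E at *
  generalize ∑ i : Fin h, (e i - 1) * 4 ^ (i : ℕ) = D at *
  have hqD : q * D + q * P = q * E := by rw [← mul_add, hD]
  have hqq : q * q = 3 * (q * P) + q := by nth_rw 2 [← hq]; ring
  have hqE : q * E = 3 * (P * E) + E := by rw [← hq]; ring
  have hq1 : (q - 1) * (1 + E) = 3 * P + 3 * (P * E) := by rw [← hq, Nat.add_sub_cancel]; ring
  rw [sq, hqq, hq1]
  omega

end Exponents

theorem stmt_12 (h : ℕ) (hh : 1 ≤ h) (e : Fin h → ℕ)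
    (he : ∀ i, e i = 1 ∨ e i = 2) :
    let q := 4 ^ h
    let w := 2 * (q ^ 2 - 1) / 3
    let e' := 1 + ∑ i : Fin h, e i * 4 ^ (i : ℕ)
    (Polynomial.X : Polynomial (ZMod 2)) ^ (q ^ 2 - 1 - q * e') *
        (Polynomial.X + 1) ^ (w + (q - 1) * e' - (q ^ 2 - 1)) =
      ∑ v ∈ Finset.univ.filter
          (fun v : Fin h → Fin 2 × Fin 2 =>
            ∀ i, ((v i).1 : ℕ) ≤ 2 - e i ∧ ((v i).2 : ℕ) ≤ e i - 1),
        Polynomial.X ^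
          ((∑ i : Fin h, ((v i).1 : ℕ) * 4 ^ (i : ℕ)) +
            (∑ i : Fin h, (3 - e i + ((v i).2 : ℕ)) * 4 ^ (h + (i : ℕ))) - 1) := by
  have he₁ : ∀ i, 1 ≤ e i := fun i => by rcases he i with hi | hi <;> omega
  have he₂ : ∀ i, e i ≤ 2 := fun i => by rcases he i with hi | hi <;> omega
  have hU : 0 < ∑ i : Fin h, (3 - e i) * 4 ^ (h + (i : ℕ)) := by
    refine lt_of_lt_of_le ?_ (single_le_sum (fun i _ => Nat.zero_le _) (mem_univ ⟨0, hh⟩))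
    exact Nat.mul_pos (by have := he₂ ⟨0, hh⟩; omega) (by positivity)
  dsimp only
  rw [exponent_X_eq_sum fun i => (he₂ i).trans (by norm_num), exponent_X_add_one_eq_sum he₁ he₂,
    add_one_pow_sum_eq_sum (fun i => add_one_pow_four_pow _) (fun i => add_one_pow_four_pow _)
      (fun i => by have := he₁ i; omega) (fun i => by have := he₂ i; omega), mul_sum]
  -- `congr` reconciles the `Decidable` instances of the two filters
  -- (`Fintype.decidableForallFintype` against `Nat.decidableForallFin`).
  refine sum_congr (by congr) fun v _ => ?_
  rw [← pow_add, sum_add_distrib]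
  simp only [add_mul, sum_add_distrib]
  congr 1
  omega
end

section
/- Let e_i ∈ {1,2} for 0 ≤ i ≤ h−1 and let ℓ = Σ_{i=0}^{h-1} v_i 4^i + Σ_{i=0}^{h-1}(3−e_i+v_{i+h})4^{h+i} − 1, where 0 ≤ v_i ≤ 2−e_i and 0 ≤ v_{i+h} ≤ e_i−1. Then ℓ mod (4^h+1) belongs to the set E = { 1 + Σ_{i=0}^{h-1} f_i 4^i : f_i ∈ {1,2} }. -/
/-!
Put `f_i = e_i + v_i - v_{i+h} ∈ {1, 2}` and `c_i = 3 - e_i + v_{i+h} ≥ 1`, so that digitwise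
`v_i + 3 = f_i + c_i`. Since `4^(h+i) ≡ -4^i (mod 4^h + 1)`, the high part `∑ c_i 4^(h+i)` is
congruent to `-∑ c_i 4^i`, and adding `∑ 3·4^i = 4^h - 1 ≡ -2` to the low part shows
`ℓ ≡ 1 + ∑ f_i 4^i`, a number below `4^h + 1`.
-/

open Finset

lemma sum_mul_pow_lt_pow {b n : ℕ} {d : ℕ → ℕ} (hd : ∀ i < n, d i < b) :
    ∑ i ∈ range n, d i * b ^ i < b ^ n := by
  induction n with
  | zero => simp
  | succ n ih =>
    rw [sum_range_succ, pow_succ]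
    have hsum := ih fun i hi => hd i (by omega)
    have hdn : d n + 1 ≤ b := hd n (by omega)
    calc ∑ i ∈ range n, d i * b ^ i + d n * b ^ n
        < b ^ n + d n * b ^ n := by omega
      _ = (d n + 1) * b ^ n := by ring
      _ ≤ b ^ n * b := by rw [mul_comm]; gcongr

lemma sum_mul_pow_add_pow {b n : ℕ} {v f c : ℕ → ℕ} (hd : ∀ i < n, v i + b = f i + c i) :
    ∑ i ∈ range n, v i * (b + 1) ^ i + (b + 1) ^ n =
      ∑ i ∈ range n, f i * (b + 1) ^ i + ∑ i ∈ range n, c i * (b + 1) ^ i + 1 := by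
  rw [← geom_sum_mul_add b n, mul_comm, mul_sum, ← add_assoc, ← sum_add_distrib,
    ← sum_add_distrib]
  congr 1
  refine sum_congr rfl fun i hi => ?_
  rw [← add_mul, ← add_mul, hd i (mem_range.mp hi)]

lemma sum_mul_pow_add_add_sum {R : Type*} [CommSemiring R] (x : R) (h : ℕ) (d : ℕ → R)
    (s : Finset ℕ) :
    ∑ i ∈ s, d i * x ^ (h + i) + ∑ i ∈ s, d i * x ^ i = (x ^ h + 1) * ∑ i ∈ s, d i * x ^ i := by
  rw [mul_sum, ← sum_add_distrib]
  exact sum_congr rfl fun i _ => by ring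

lemma add_sub_one_mod_succ {A B F C P : ℕ} (hlow : A + P = F + C + 1)
    (hhigh : B + C = (P + 1) * C) (hF : F < P) (hC : 1 ≤ C) :
    (A + B - 1) % (P + 1) = 1 + F := by
  obtain ⟨D, rfl⟩ : ∃ D, C = D + 1 := ⟨C - 1, by omega⟩
  have hfold : A + B - 1 = 1 + F + (P + 1) * D := by
    rw [mul_add, mul_one] at hhigh
    generalize (P + 1) * D = X at *
    omega
  rw [hfold, Nat.add_mul_mod_self_left, Nat.mod_eq_of_lt (by omega)]

lemma digit_split {e v w : ℕ} (he : e = 1 ∨ e = 2) (hv : v ≤ 2 - e) (hw : w ≤ e - 1) :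
    (e + v - w = 1 ∨ e + v - w = 2) ∧ v + 3 = (e + v - w) + (3 - e + w) ∧ 1 ≤ 3 - e + w := by
  omega

theorem stmt_13 (h : ℕ) (hh : 1 ≤ h) (e v : ℕ → ℕ)
    (he : ∀ i < h, e i = 1 ∨ e i = 2)
    (hv1 : ∀ i < h, v i ≤ 2 - e i) (hv2 : ∀ i < h, v (i + h) ≤ e i - 1) :
    ∃ f : ℕ → ℕ, (∀ i < h, f i = 1 ∨ f i = 2) ∧
      ((∑ i ∈ Finset.range h, v i * 4 ^ i) +
          (∑ i ∈ Finset.range h, (3 - e i + v (i + h)) * 4 ^ (h + i)) - 1) % (4 ^ h + 1) =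
        1 + ∑ i ∈ Finset.range h, f i * 4 ^ i := by
  have hdigit i (hi : i < h) := digit_split (he i hi) (hv1 i hi) (hv2 i hi)
  refine ⟨fun i => e i + v i - v (i + h), fun i hi => (hdigit i hi).1, ?_⟩
  have hlow := sum_mul_pow_add_pow (b := 3) (c := fun i => 3 - e i + v (i + h))
    fun i hi => (hdigit i hi).2.1
  have hhigh := sum_mul_pow_add_add_sum 4 h (fun i => 3 - e i + v (i + h)) (range h)
  have hF := sum_mul_pow_lt_pow (b := 4) (d := fun i => e i + v i - v (i + h))
    fun i hi => by have := (hdigit i hi).1; omega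
  have hC : 1 ≤ ∑ i ∈ range h, (3 - e i + v (i + h)) * 4 ^ i := by
    have := single_le_sum (f := fun i => (3 - e i + v (i + h)) * 4 ^ i)
      (fun i _ => Nat.zero_le _) (mem_range.mpr hh)
    have := (hdigit 0 hh).2.2
    simp only [pow_zero, mul_one] at *
    omega
  exact add_sub_one_mod_succ hlow hhigh hF hC
end

section
/- Let q = 2^{2h}, w = 2(q^2−1)/3, e ∈ E, and c ∈ GF(q^2)* \ U_{q+1}. Then there exist coefficients (a_ℓ)_{ℓ∈E} in GF(q^2) such that (u+c^q)^e (cu+1)^{w−e} = Σ_{ℓ∈E} a_ℓ u^ℓ for all u ∈ U_{q+1}. -/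
/-!
For `u ^ (q + 1) = 1` the Frobenius gives `u + c ^ q = u * (c * u + 1) ^ q`, and `c * u + 1 ≠ 0`
since `c ^ (q + 1) ≠ 1`, so `(c * u + 1) ^ (q ^ 2 - 1) = 1`. Write `q = 3 s + 1` with
`s = ∑_{i<h} 4 ^ i`, and split the base-4 digits `d i ∈ {1, 2}` of `e - 1` as `e = 1 + s + A`,
`A + B = s` (`A` collects the digits 2, `B` the digits 1). Reducing exponents modulo `q ^ 2 - 1`,
the left side becomes `u ^ (1 + s) * (u + c ^ q) ^ A * (c * u + 1) ^ B`, which by the Frobenius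
again is `u ^ (1 + s) * ∏_{i<h} (α_i u ^ 4 ^ i + β_i)`. Expanding the product only produces the
monomials `u ^ (1 + s + ∑_{i ∈ T} 4 ^ i)` with `T ⊆ {0, …, h - 1}`, and these exponents form `E`.
-/

open Finset

theorem charP_two_of_card_eq_four_pow {F : Type*} [Field F] [Fintype F] {n : ℕ}
    (hF : Fintype.card F = 4 ^ n) : CharP F 2 := by
  have h4 : (4 : F) ^ n = 0 := by exact_mod_cast hF ▸ FiniteField.cast_card_eq_zero F
  rw [show (4 : F) = 2 * 2 by norm_num] at h4
  exact CharTwo.of_one_ne_zero_of_two_eq_zero one_ne_zero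
    (mul_self_eq_zero.mp (eq_zero_of_pow_eq_zero h4))

theorem add_pow_four_pow {R : Type*} [CommSemiring R] [CharP R 2] (x y : R) (n : ℕ) :
    (x + y) ^ 4 ^ n = x ^ 4 ^ n + y ^ 4 ^ n := by
  rw [show 4 ^ n = 2 ^ (2 * n) by rw [pow_mul]; norm_num]
  exact add_pow_expChar_pow x y 2 (2 * n)

theorem add_pow_eq_mul_mul_add_one_pow {R : Type*} [CommRing R] (p : ℕ) [ExpChar R p] {n : ℕ}
    {u : R} (c : R) (hu : u ^ (p ^ n + 1) = 1) :
    u + c ^ p ^ n = u * (c * u + 1) ^ p ^ n := by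
  rw [add_pow_expChar_pow, mul_pow, one_pow, mul_add, mul_one, mul_left_comm, ← pow_succ', hu,
    mul_one, add_comm]

theorem mul_add_one_ne_zero_of_pow_ne_one {F : Type*} [Field F] [CharP F 2] {c u : F} {n : ℕ}
    (hc : c ^ n ≠ 1) (hu : u ^ n = 1) : c * u + 1 ≠ 0 := fun h0 => hc <|
  calc c ^ n = c ^ n * u ^ n := by rw [hu, mul_one]
    _ = 1 := by rw [← mul_pow, CharTwo.add_eq_zero.mp h0, one_pow]

theorem pow_mul_pow_eq_of_eq_mul_pow {M : Type*} [CommMonoid M] {x y u : M} {q N m A B e w : ℕ}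
    (hx : x = u * y ^ q) (hy : y ^ N = 1) (he : e = m + A) (hexp : q * e + w = N + (q * A + B)) :
    x ^ e * y ^ w = u ^ m * (x ^ A * y ^ B) := by
  subst hx he
  calc (u * y ^ q) ^ (m + A) * y ^ w = u ^ (m + A) * y ^ (q * (m + A) + w) := by
        rw [mul_pow, ← pow_mul, pow_add y, mul_assoc]
    _ = u ^ (m + A) * y ^ (q * A + B) := by rw [hexp, pow_add y, hy, one_mul]
    _ = u ^ m * ((u * y ^ q) ^ A * y ^ B) := by
        rw [pow_add, pow_add, mul_pow, ← pow_mul]; simp only [mul_assoc]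

theorem four_pow_eq_three_mul_sum_add_one (n : ℕ) : 4 ^ n = 3 * ∑ i ∈ range n, 4 ^ i + 1 := by
  have := geom_sum_mul_add 3 n
  norm_num at this
  omega

theorem three_mul_add_one_mul_add_tsub_eq {s A B e : ℕ} (hs : 1 ≤ s) (hAB : A + B = s)
    (he : e = 1 + s + A) :
    (3 * s + 1) * e + (2 * ((3 * s + 1) ^ 2 - 1) / 3 - e) =
      ((3 * s + 1) ^ 2 - 1) + ((3 * s + 1) * A + B) := by
  have hw : 2 * ((3 * s + 1) ^ 2 - 1) / 3 = 6 * s ^ 2 + 4 * s := by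
    rw [show (3 * s + 1) ^ 2 - 1 = 3 * (3 * s ^ 2 + 2 * s) by ring_nf; omega]
    omega
  rw [hw, show (3 * s + 1) ^ 2 - 1 = 9 * s ^ 2 + 6 * s by ring_nf; omega]
  have : e ≤ 6 * s ^ 2 + 4 * s := by nlinarith
  zify [this] at hAB he ⊢
  linear_combination (3 * (s : ℤ)) * he - hAB

section Digits

variable {ι : Type*} {I : Finset ι} {d : ι → ℕ}

theorem sum_mul_eq_sum_add_sum_pred_mul (hd : ∀ i ∈ I, d i = 1 ∨ d i = 2) (k : ι → ℕ) :
    ∑ i ∈ I, d i * k i = ∑ i ∈ I, k i + ∑ i ∈ I, (d i - 1) * k i := by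
  rw [← sum_add_distrib]
  refine sum_congr rfl fun i hi => ?_
  rcases hd i hi with h | h <;> rw [h] <;> omega

theorem sum_pred_mul_add_sum_two_sub_mul (hd : ∀ i ∈ I, d i = 1 ∨ d i = 2) (k : ι → ℕ) :
    ∑ i ∈ I, (d i - 1) * k i + ∑ i ∈ I, (2 - d i) * k i = ∑ i ∈ I, k i := by
  rw [← sum_add_distrib]
  refine sum_congr rfl fun i hi => ?_
  rcases hd i hi with h | h <;> simp [h]

theorem pow_sum_pred_mul_mul_pow_sum_two_sub_mul {M : Type*} [CommMonoid M]
    (hd : ∀ i ∈ I, d i = 1 ∨ d i = 2) (k : ι → ℕ) (x y : M) :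
    x ^ (∑ i ∈ I, (d i - 1) * k i) * y ^ (∑ i ∈ I, (2 - d i) * k i) =
      ∏ i ∈ I, if d i = 1 then y ^ k i else x ^ k i := by
  rw [← prod_pow_eq_pow_sum, ← prod_pow_eq_pow_sum, ← prod_mul_distrib]
  refine prod_congr rfl fun i hi => ?_
  rcases hd i hi with h | h <;> simp [h]

end Digits

theorem one_add_sum_add_sum_mem_image {b h : ℕ} {T : Finset ℕ} (hT : T ⊆ range h) :
    1 + ∑ i ∈ range h, b ^ i + ∑ i ∈ T, b ^ i ∈ (univ : Finset (Fin h → Fin 2)).image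
      (fun f => 1 + ∑ i : Fin h, ((f i : ℕ) + 1) * b ^ (i : ℕ)) := by
  classical
  refine mem_image.mpr ⟨fun i => if (i : ℕ) ∈ T then 1 else 0, mem_univ _, ?_⟩
  simp only [apply_ite (fun x : Fin 2 => (x : ℕ)), Fin.val_one, Fin.val_zero]
  rw [Fin.sum_univ_eq_sum_range (fun i => ((if i ∈ T then 1 else 0) + 1) * b ^ i) h]
  simp only [add_mul, ite_mul, one_mul, zero_mul, sum_add_distrib, sum_ite_mem,
    inter_eq_right.mpr hT]
  ring

theorem exists_sum_pow_eq_sum_of_mapsTo {R ι : Type*} [CommSemiring R] {s : Finset ι}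
    {S : Finset ℕ} {g : ι → ℕ} (hg : ∀ t ∈ s, g t ∈ S) (K : ι → R) :
    ∃ a : ℕ → R, ∀ u : R, ∑ t ∈ s, K t * u ^ g t = ∑ l ∈ S, a l * u ^ l := by
  classical
  refine ⟨fun l => ∑ t ∈ s with g t = l, K t, fun u => ?_⟩
  rw [← sum_fiberwise_of_maps_to hg]
  refine sum_congr rfl fun l _ => ?_
  rw [sum_mul]
  exact sum_congr rfl fun t ht => by rw [(mem_filter.mp ht).2]

theorem exists_pow_mul_prod_add_eq_sum {R ι : Type*} [CommSemiring R] [DecidableEq ι]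
    (I : Finset ι) (k : ι → ℕ) (α β : ι → R) (m : ℕ) {S : Finset ℕ}
    (hS : ∀ T ⊆ I, m + ∑ i ∈ T, k i ∈ S) :
    ∃ a : ℕ → R, ∀ u : R, u ^ m * ∏ i ∈ I, (α i * u ^ k i + β i) = ∑ l ∈ S, a l * u ^ l := by
  obtain ⟨a, ha⟩ := exists_sum_pow_eq_sum_of_mapsTo (s := I.powerset)
    (fun T hT => hS T (mem_powerset.mp hT)) (fun T => (∏ i ∈ T, α i) * ∏ i ∈ I \ T, β i)
  refine ⟨a, fun u => ?_⟩
  rw [← ha, prod_add, mul_sum]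
  refine sum_congr rfl fun T _ => ?_
  rw [prod_mul_distrib, prod_pow_eq_pow_sum, pow_add]
  ring

theorem stmt_14_general (h : ℕ) (hh : 1 ≤ h) (F : Type) [Field F] [Fintype F]
    (hF : Fintype.card F = (4 ^ h) ^ 2) (c : F)
    (hcU : c ^ (4 ^ h + 1) ≠ 1) (e : ℕ)
    (he : ∃ d : ℕ → ℕ, (∀ i < h, d i = 1 ∨ d i = 2) ∧
      e = 1 + ∑ i ∈ Finset.range h, d i * 4 ^ i) :
    let q := 4 ^ h
    let w := 2 * (q ^ 2 - 1) / 3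
    let E : Finset ℕ := (Finset.univ : Finset (Fin h → Fin 2)).image
      (fun f => 1 + ∑ i : Fin h, ((f i : ℕ) + 1) * 4 ^ (i : ℕ))
    ∃ a : ℕ → F, ∀ u : F, u ^ (q + 1) = 1 →
      (u + c ^ q) ^ e * (c * u + 1) ^ (w - e) = ∑ l ∈ E, a l * u ^ l := by
  intro q w E
  obtain ⟨d, hd, rfl⟩ := he
  replace hd : ∀ i ∈ range h, d i = 1 ∨ d i = 2 := fun i hi => hd i (mem_range.mp hi)
  have : CharP F 2 := charP_two_of_card_eq_four_pow (n := h * 2) (by rw [hF, pow_mul])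
  set s := ∑ i ∈ range h, 4 ^ i
  have hq : q = 3 * s + 1 := four_pow_eq_three_mul_sum_add_one h
  have hs : 1 ≤ s := single_le_sum (f := (4 ^ ·)) (by simp) (mem_range.mpr hh)
  obtain ⟨a, ha⟩ := exists_pow_mul_prod_add_eq_sum (range h) (4 ^ ·)
    (fun i => if d i = 1 then c ^ 4 ^ i else 1) (fun i => if d i = 1 then 1 else (c ^ q) ^ 4 ^ i)
    (1 + s) (S := E) fun T hT => one_add_sum_add_sum_mem_image hT
  refine ⟨a, fun u hu => ?_⟩
  have hx : u + c ^ q = u * (c * u + 1) ^ q := by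
    rw [show q = 2 ^ (2 * h) by simp [q, pow_mul]] at hu ⊢
    exact add_pow_eq_mul_mul_add_one_pow 2 c hu
  have hfactor : ∀ i ∈ range h, (if d i = 1 then (c * u + 1) ^ 4 ^ i else (u + c ^ q) ^ 4 ^ i) =
      (if d i = 1 then c ^ 4 ^ i else 1) * u ^ 4 ^ i + if d i = 1 then 1 else (c ^ q) ^ 4 ^ i := by
    intro i _
    split_ifs <;> simp [add_pow_four_pow, mul_pow]
  rw [← ha, ← prod_congr rfl hfactor, ← pow_sum_pred_mul_mul_pow_sum_two_sub_mul hd,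
    sum_mul_eq_sum_add_sum_pred_mul hd]
  refine pow_mul_pow_eq_of_eq_mul_pow hx
    (FiniteField.pow_card_sub_one_eq_one _ (mul_add_one_ne_zero_of_pow_ne_one hcU hu))
    (add_assoc 1 s _).symm ?_
  rw [hF]
  change q * _ + (2 * (q ^ 2 - 1) / 3 - _) = q ^ 2 - 1 + _
  rw [hq]
  exact three_mul_add_one_mul_add_tsub_eq hs (sum_pred_mul_add_sum_two_sub_mul hd _)
    (add_assoc 1 s _).symm

theorem stmt_14 (h : ℕ) (hh : 1 ≤ h) (F : Type) [Field F] [Fintype F]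
    (hF : Fintype.card F = (4 ^ h) ^ 2) (c : F) (hc0 : c ≠ 0)
    (hcU : c ^ (4 ^ h + 1) ≠ 1) (e : ℕ)
    (he : ∃ d : ℕ → ℕ, (∀ i < h, d i = 1 ∨ d i = 2) ∧
      e = 1 + ∑ i ∈ Finset.range h, d i * 4 ^ i) :
    let q := 4 ^ h
    let w := 2 * (q ^ 2 - 1) / 3
    let E : Finset ℕ := (Finset.univ : Finset (Fin h → Fin 2)).image
      (fun f => 1 + ∑ i : Fin h, ((f i : ℕ) + 1) * 4 ^ (i : ℕ))
    ∃ a : ℕ → F, ∀ u : F, u ^ (q + 1) = 1 →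
      (u + c ^ q) ^ e * (c * u + 1) ^ (w - e) = ∑ l ∈ E, a l * u ^ l :=
  stmt_14_general h hh F hF c hcU e he
end

section
/- Let q = 2^m with m ≥ 2, β a primitive (q+1)-th root of unity in GF(q^2), and for 1 ≤ u ≤ q/2 let C_u be the cyclic code of length q+1 over GF(q) with generator polynomial g_u(x) = ∏_{i=u}^{q/2} M_{β^i}(x), where M_{β^i}(x) = (x−β^i)(x−β^{−i}) is the minimal polynomial of β^i over GF(q). Then C_u is a [q+1, 2u−1, q−2u+3] MDS code. -/
/-!
A codeword is a multiple of `g` of degree `≤ q`, so multiplication by `g` identifies the code with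
the polynomials of degree `< q + 1 - deg g = 2u - 1`, which gives its size. Since
`β⁻¹ ^ i = β ^ (q + 1 - i)`, the roots of `g` contain the `q - 2u + 2` consecutive powers
`β ^ u, …, β ^ (q + 1 - u)`, so by the BCH bound (a Vandermonde determinant on the support of a
codeword) every nonzero codeword has weight at least `q - 2u + 3`. The coefficient vector of `g`
itself has at most `deg g + 1 = q - 2u + 3` nonzero entries.
-/

open Polynomial Function

namespace Polynomial

section Semiring

variable {R : Type*} [Semiring R] {n : ℕ}

theorem coe_degreeLTEquiv_symm (v : Fin n → R) :
    ((degreeLTEquiv R n).symm v : R[X]) = ∑ i, C (v i) * X ^ (i : ℕ) := by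
  simp [degreeLTEquiv, C_mul_X_pow_eq_monomial]

theorem hammingNorm_degreeLTEquiv_le [DecidableEq R] (p : degreeLT R n) :
    hammingNorm (degreeLTEquiv R n p) ≤ (p : R[X]).natDegree + 1 := by
  calc hammingNorm (degreeLTEquiv R n p)
      ≤ (Finset.range ((p : R[X]).natDegree + 1)).card := by
        refine Finset.card_le_card_of_injOn (fun i => (i : ℕ)) (fun i hi => ?_)
          Fin.val_injective.injOn
        simp only [Finset.coe_filter, Set.mem_ofPred_eq, Finset.mem_univ, true_and] at hi
        exact Finset.mem_range_succ_iff.mpr (le_natDegree_of_ne_zero hi)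
    _ = _ := Finset.card_range _

theorem degree_mul_lt_iff [NoZeroDivisors R] {g h : R[X]} (hg : g ≠ 0) (hgn : g.natDegree ≤ n) :
    (g * h).degree < n ↔ h.degree < ↑(n - g.natDegree) := by
  rcases eq_or_ne h 0 with rfl | hh
  · simp
  rw [degree_mul, degree_eq_natDegree hg, degree_eq_natDegree hh]
  norm_cast
  omega

end Semiring

theorem bijective_mul_degreeLT {R : Type*} [CommRing R] [IsDomain R] {n : ℕ} {g : R[X]}
    (hg : g ≠ 0) (hgn : g.natDegree ≤ n) :
    Bijective fun h : degreeLT R (n - g.natDegree) =>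
      (⟨⟨g * h, mem_degreeLT.2 ((degree_mul_lt_iff hg hgn).2 (mem_degreeLT.1 h.2))⟩,
        dvd_mul_right g h⟩ : {p : degreeLT R n // g ∣ (p : R[X])}) := by
  constructor
  · intro h₁ h₂ h
    simpa using mul_left_cancel₀ hg (congrArg (fun p => ((p.1 : degreeLT R n) : R[X])) h)
  · rintro ⟨p, h, hph⟩
    have hh := (degree_mul_lt_iff hg hgn).1 (hph ▸ mem_degreeLT.1 p.2)
    exact ⟨⟨h, mem_degreeLT.2 hh⟩, Subtype.ext (Subtype.ext hph.symm)⟩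

theorem card_setOf_dvd_sum {F : Type*} [Field F] [Finite F] {n : ℕ} {g : F[X]} (hg : g ≠ 0)
    (hgn : g.natDegree ≤ n) :
    Nat.card {v : Fin n → F | g ∣ ∑ i, C (v i) * X ^ (i : ℕ)} =
      Nat.card F ^ (n - g.natDegree) :=
  calc Nat.card {v : Fin n → F | g ∣ ∑ i, C (v i) * X ^ (i : ℕ)}
      = Nat.card {p : degreeLT F n // g ∣ (p : F[X])} :=
        Nat.card_congr <| (degreeLTEquiv F n).symm.toEquiv.subtypeEquiv fun v => by
          simp [coe_degreeLTEquiv_symm]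
    _ = Nat.card (degreeLT F (n - g.natDegree)) :=
        (Nat.card_congr (Equiv.ofBijective _ (bijective_mul_degreeLT hg hgn))).symm
    _ = Nat.card (Fin (n - g.natDegree) → F) := Nat.card_congr (degreeLTEquiv F _).toEquiv
    _ = Nat.card F ^ (n - g.natDegree) := by simp [Nat.card_fun]

theorem exists_sum_eq_hammingNorm_le {R : Type*} [Semiring R] [DecidableEq R] {n : ℕ} {g : R[X]}
    (hgn : g.natDegree < n) :
    ∃ v : Fin n → R,
      ∑ i, C (v i) * X ^ (i : ℕ) = g ∧ hammingNorm v ≤ g.natDegree + 1 := by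
  have hg : g ∈ degreeLT R n :=
    mem_degreeLT.2 (degree_le_natDegree.trans_lt (by exact_mod_cast hgn))
  refine ⟨degreeLTEquiv R n ⟨g, hg⟩, ?_, hammingNorm_degreeLTEquiv_le _⟩
  rw [← coe_degreeLTEquiv_symm, LinearEquiv.symm_apply_apply]

end Polynomial

theorem eq_zero_of_forall_sum_mul_pow_eq_zero {ι R : Type*} [Fintype ι] [CommRing R]
    [IsDomain R] {x v : ι → R} (hx : Injective x)
    (h : ∀ j < Fintype.card ι, ∑ i, v i * x i ^ j = 0) :
    v = 0 := by
  let e := Fintype.equivFin ι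
  have : v ∘ e.symm = 0 := Matrix.eq_zero_of_forall_pow_sum_mul_pow_eq_zero
    (hx.comp e.symm.injective) fun j => by
      simpa [e.symm.sum_comp fun i => v i * x i ^ (j : ℕ)] using h j j.2
  funext i
  simpa using congrFun this (e i)

theorem lt_hammingNorm_of_forall_sum_mul_pow_eq_zero {ι K : Type*} [Fintype ι] [Field K]
    [DecidableEq K] {x c : ι → K} (hx : Injective x) (hx0 : ∀ i, x i ≠ 0) {b N : ℕ}
    (h : ∀ j < N, ∑ i, c i * x i ^ (b + j) = 0) (hc : c ≠ 0) : N < hammingNorm c := by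
  by_contra! hN
  obtain ⟨i, hi⟩ : ∃ i, c i ≠ 0 := by simpa [funext_iff] using hc
  have hsupp : ∀ j < hammingNorm c, ∑ k : {k // c k ≠ 0}, c k * x k ^ b * x k ^ j = 0 := by
    intro j hj
    calc ∑ k : {k // c k ≠ 0}, c k * x k ^ b * x k ^ j
        = ∑ k with c k ≠ 0, c k * x k ^ (b + j) := by
          simp only [pow_add, mul_assoc]
          exact (Finset.sum_subtype _ (fun k => Finset.mem_filter_univ k)
            fun k => c k * (x k ^ b * x k ^ j)).symm
      _ = ∑ k, c k * x k ^ (b + j) := Finset.sum_filter_of_ne fun k _ hk => left_ne_zero_of_mul hk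
      _ = 0 := h j (hj.trans_le hN)
  have := eq_zero_of_forall_sum_mul_pow_eq_zero (v := fun k : {k // c k ≠ 0} => c k * x k ^ b)
    (hx.comp Subtype.val_injective) (by
      rw [Fintype.card_subtype]
      exact hsupp)
  exact mul_ne_zero hi (pow_ne_zero b (hx0 i)) (congrFun this ⟨i, hi⟩)

theorem IsPrimitiveRoot.lt_hammingNorm_of_dvd {F K : Type*} [Field F] [Field K] [Algebra F K]
    [DecidableEq F] {n : ℕ} {β : K} (hβ : IsPrimitiveRoot β n) {g : F[X]} {b N : ℕ}
    (hg : ∀ j < N, aeval (β ^ (b + j)) g = 0) {v : Fin n → F}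
    (hv : g ∣ ∑ i, C (v i) * X ^ (i : ℕ)) (hv0 : v ≠ 0) : N < hammingNorm v := by
  classical
  have hn : n ≠ 0 := by
    rintro rfl
    exact hv0 (Subsingleton.elim _ _)
  rw [← hammingNorm_comp (fun _ => algebraMap F K) (fun _ => (algebraMap F K).injective)
    (fun _ => map_zero _)]
  refine lt_hammingNorm_of_forall_sum_mul_pow_eq_zero (b := b)
    (x := fun i : Fin n => β ^ (i : ℕ))
    (fun i j hij => Fin.ext (hβ.pow_inj i.2 j.2 hij)) (fun i => pow_ne_zero _ (hβ.ne_zero hn))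
    (fun j hj => ?_) (by simpa [funext_iff] using hv0)
  have := aeval_eq_zero_of_dvd_aeval_eq_zero hv (hg j hj)
  simp only [map_sum, map_mul, aeval_C, map_pow, aeval_X] at this
  simpa only [← pow_mul, mul_comm] using this

/-- For `ζ` of order `q + 1` and `s = q / 2` this is the generator polynomial `g_u` of the paper,
each factor being the minimal polynomial of `ζ ^ i` over the subfield of order `q`. -/
noncomputable def pairedRootsProd {K : Type*} [Field K] (ζ : K) (u s : ℕ) : K[X] :=
  ∏ i ∈ Finset.Icc u s, (X - C (ζ ^ i)) * (X - C (ζ⁻¹ ^ i))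

section pairedRootsProd

variable {K : Type*} [Field K] (ζ : K) (u s : ℕ)

theorem monic_pairedRootsProd : (pairedRootsProd ζ u s).Monic :=
  monic_prod_of_monic _ _ fun _ _ => (monic_X_sub_C _).mul (monic_X_sub_C _)

theorem natDegree_pairedRootsProd : (pairedRootsProd ζ u s).natDegree = 2 * (s + 1 - u) := by
  rw [pairedRootsProd,
    natDegree_prod_of_monic _ _ fun _ _ => (monic_X_sub_C _).mul (monic_X_sub_C _)]
  simp only [(monic_X_sub_C _).natDegree_mul (monic_X_sub_C _), natDegree_X_sub_C,
    Finset.sum_const, Nat.card_Icc, smul_eq_mul]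
  ring

variable {ζ u s}

theorem eval_pow_pairedRootsProd {n t : ℕ} (hζ : ζ ^ n = 1) (hn : n ≤ 2 * s + 1)
    (hut : u ≤ t) (htn : t + u ≤ n) : (pairedRootsProd ζ u s).eval (ζ ^ t) = 0 := by
  rw [pairedRootsProd, eval_prod]
  rcases le_or_gt t s with hts | hst
  · exact Finset.prod_eq_zero (Finset.mem_Icc.2 ⟨hut, hts⟩) (by simp)
  · have hinv : ζ⁻¹ ^ (n - t) = ζ ^ t := by
      rw [inv_pow]
      exact inv_eq_of_mul_eq_one_right (by rw [← pow_add, Nat.sub_add_cancel (by omega), hζ])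
    exact Finset.prod_eq_zero (i := n - t) (Finset.mem_Icc.2 ⟨by omega, by omega⟩)
      (by simp [hinv])

end pairedRootsProd

theorem stmt_16_general (m : ℕ) (hm : 2 ≤ m) (F K : Type) [Field F] [Field K]
    [Fintype F] [Algebra F K] [DecidableEq F]
    (hF : Fintype.card F = 2 ^ m)
    (β : K) (hβ : β ^ (2 ^ m + 1) = 1)
    (hβprim : ∀ k, 0 < k → k < 2 ^ m + 1 → β ^ k ≠ 1)
    (u : ℕ) (hu1 : 1 ≤ u) (hu2 : u ≤ 2 ^ m / 2)
    (g : Polynomial F)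
    (hg : Polynomial.map (algebraMap F K) g =
      ∏ i ∈ Finset.Icc u (2 ^ m / 2),
        (Polynomial.X - Polynomial.C (β ^ i)) * (Polynomial.X - Polynomial.C (β⁻¹ ^ i)))
    (C : Set (Fin (2 ^ m + 1) → F))
    (hC : C = {v | g ∣ ∑ i : Fin (2 ^ m + 1), Polynomial.C (v i) * Polynomial.X ^ (i : ℕ)}) :
    Nat.card C = (2 ^ m) ^ (2 * u - 1) ∧
      2 ^ m - 2 * u + 3 = (2 ^ m + 1) - (2 * u - 1) + 1 ∧
      (∀ v ∈ C, v ≠ 0 → 2 ^ m - 2 * u + 3 ≤ hammingNorm v) ∧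
      (∃ v ∈ C, v ≠ 0 ∧ hammingNorm v = 2 ^ m - 2 * u + 3) := by
  subst hC
  change map (algebraMap F K) g = pairedRootsProd β u (2 ^ m / 2) at hg
  have hq : 2 * (2 ^ m / 2) = 2 ^ m := Nat.mul_div_cancel' (dvd_pow_self 2 (by omega))
  have hg0 : g ≠ 0 := fun h =>
    (monic_pairedRootsProd β u _).ne_zero (by rw [← hg, h, Polynomial.map_zero])
  have hdeg : g.natDegree = 2 ^ m + 2 - 2 * u := by
    rw [← natDegree_map_eq_of_injective (algebraMap F K).injective, hg, natDegree_pairedRootsProd]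
    omega
  have hroots : ∀ j < 2 ^ m - 2 * u + 2, aeval (β ^ (u + j)) g = 0 := fun j hj => by
    rw [aeval_def, eval₂_eq_eval_map, hg]
    exact eval_pow_pairedRootsProd hβ (by omega) (by omega) (by omega)
  have hdist : ∀ v : Fin (2 ^ m + 1) → F, g ∣ ∑ i, C (v i) * X ^ (i : ℕ) → v ≠ 0 →
      2 ^ m - 2 * u + 3 ≤ hammingNorm v := fun v hv hv0 =>
    (IsPrimitiveRoot.mk_of_lt β (by omega) hβ hβprim).lt_hammingNorm_of_dvd hroots hv hv0
  refine ⟨?_, by omega, hdist, ?_⟩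
  · rw [card_setOf_dvd_sum hg0 (by omega), hdeg, Nat.card_eq_fintype_card, hF]
    congr 1
    omega
  · obtain ⟨v, hv, hwt⟩ := exists_sum_eq_hammingNorm_le (n := 2 ^ m + 1) (g := g) (by omega)
    have hv0 : v ≠ 0 := by
      rintro rfl
      simp [eq_comm, hg0] at hv
    exact ⟨v, hv ▸ dvd_rfl, hv0, le_antisymm (by omega) (hdist v (hv ▸ dvd_rfl) hv0)⟩

theorem stmt_16 (m : ℕ) (hm : 2 ≤ m) (F K : Type) [Field F] [Field K]
    [Fintype F] [Fintype K] [Algebra F K] [DecidableEq F]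
    (hF : Fintype.card F = 2 ^ m) (hK : Fintype.card K = (2 ^ m) ^ 2)
    (β : K) (hβ : β ^ (2 ^ m + 1) = 1)
    (hβprim : ∀ k, 0 < k → k < 2 ^ m + 1 → β ^ k ≠ 1)
    (u : ℕ) (hu1 : 1 ≤ u) (hu2 : u ≤ 2 ^ m / 2)
    (g : Polynomial F)
    (hg : Polynomial.map (algebraMap F K) g =
      ∏ i ∈ Finset.Icc u (2 ^ m / 2),
        (Polynomial.X - Polynomial.C (β ^ i)) * (Polynomial.X - Polynomial.C (β⁻¹ ^ i)))
    (C : Set (Fin (2 ^ m + 1) → F))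
    (hC : C = {v | g ∣ ∑ i : Fin (2 ^ m + 1), Polynomial.C (v i) * Polynomial.X ^ (i : ℕ)}) :
    Nat.card C = (2 ^ m) ^ (2 * u - 1) ∧
      2 ^ m - 2 * u + 3 = (2 ^ m + 1) - (2 * u - 1) + 1 ∧
      (∀ v ∈ C, v ≠ 0 → 2 ^ m - 2 * u + 3 ≤ hammingNorm v) ∧
      (∃ v ∈ C, v ≠ 0 ∧ hammingNorm v = 2 ^ m - 2 * u + 3) :=
  stmt_16_general m hm F K hF β hβ hβprim u hu1 hu2 g hg C hC
end

section
/- Let q = 2^m with m ≥ 2 and C_u as above. Then C_u ∩ C_u^⊥ = {0}, i.e., C_u is a linear complementary dual (LCD, reversible) code. -/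
/-!
Let `N = q + 1`, `V = ∑ vᵢ Xⁱ`, and let `ĝ` be the image of `g` in `K[X]`. Its roots are
distinct `N`-th roots of unity, so `ĝ ∣ X ^ N - 1`, and they come in pairs `β^i, β^(-i)`.
If `v ∈ C`, then `V` vanishes at the roots of `ĝ`. If `ζ` is any other `N`-th root of unity,
then `ζ⁻¹` is not a root of `ĝ` either. Hence `ĝ` divides `(X ^ N - 1) / (ζ X - 1) = ∑ ζⁱ Xⁱ`,
so the vector `(ζⁱ)` is a `K`-linear combination of the codewords `Xˢ g`. Orthogonality then
gives `V(ζ) = ∑ vᵢ ζⁱ = 0`. So `V` has `N` distinct roots while `deg V < N`, and so `v = 0`.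
-/

open Polynomial Finset

theorem sum_C_mul_X_pow_eq_ofFn {R : Type*} [Semiring R] [DecidableEq R] {N : ℕ}
    (v : Fin N → R) : ∑ i : Fin N, C (v i) * X ^ (i : ℕ) = ofFn N v := by
  simp only [ofFn_eq_sum_monomial, C_mul_X_pow_eq_monomial]

section GeometricPolynomial

variable {K : Type*} [Field K] [DecidableEq K] {N : ℕ} {b : K}

theorem ofFn_pow_mul_eq_X_pow_sub_one (hb : b ^ N = 1) :
    ofFn N (fun i : Fin N => b ^ (i : ℕ)) * (C b * X - 1) = X ^ N - 1 := by
  rw [← sum_C_mul_X_pow_eq_ofFn, Fin.sum_univ_eq_sum_range (fun i => C (b ^ i) * X ^ i)]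
  simp_rw [C_pow, ← mul_pow]
  rw [geom_sum_mul, mul_pow, ← C_pow, hb, C_1, one_mul]

theorem dvd_ofFn_pow_of_dvd_X_pow_sub_one {P : K[X]} (hP : P ∣ X ^ N - 1) (hb : b ^ N = 1)
    (hPb : ¬P.IsRoot b⁻¹) :
    P ∣ ofFn N (fun i : Fin N => b ^ (i : ℕ)) := by
  rcases N.eq_zero_or_pos with rfl | hN
  · simp
  have hb0 : b ≠ 0 := (IsUnit.of_pow_eq_one hb hN.ne').ne_zero
  have hlin : C b * X - 1 = C b * (X - C b⁻¹) := by
    rw [mul_sub, ← C_mul, mul_inv_cancel₀ hb0, C_1]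
  have hcop : IsCoprime P (C b * X - 1) := by
    rw [hlin]
    refine .mul_right (isCoprime_one_right.of_isCoprime_of_dvd_right (isUnit_C.2 hb0.isUnit).dvd)
      ((irreducible_X_sub_C _).coprime_iff_not_dvd.2 fun h => hPb (dvd_iff_isRoot.1 h)).symm
  exact hcop.dvd_of_dvd_mul_right (ofFn_pow_mul_eq_X_pow_sub_one hb ▸ hP)

end GeometricPolynomial

variable {F K : Type*} [Field F] [Field K] [Algebra F K] {N : ℕ}

/-- For `g ∣ X ^ N - 1` this is the cyclic code of length `N` with generator polynomial `g`. -/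
def polynomialCode (N : ℕ) (g : F[X]) : Set (Fin N → F) :=
  {v | g ∣ ∑ i : Fin N, C (v i) * X ^ (i : ℕ)}

theorem toFn_mem_polynomialCode {g p : F[X]} (hgp : g ∣ p) (hp : p.natDegree < N) :
    toFn N p ∈ polynomialCode N g := by
  classical
  rw [polynomialCode, Set.mem_ofPred_eq, sum_C_mul_X_pow_eq_ofFn,
    ofFn_comp_toFn_eq_id_of_natDegree_lt hp]
  exact hgp

theorem sum_algebraMap_mul_coeff_eq_zero {g : F[X]} {v : Fin N → F}
    (hv : ∀ w ∈ polynomialCode N g, ∑ i, v i * w i = 0) {P : K[X]}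
    (hgP : g.map (algebraMap F K) ∣ P) (hP : P.natDegree < N) :
    ∑ i : Fin N, algebraMap F K (v i) * P.coeff i = 0 := by
  obtain ⟨f, rfl⟩ := hgP
  by_cases hf : f = 0
  · simp [hf]
  by_cases hg : g = 0
  · simp [hg]
  set gK := g.map (algebraMap F K)
  have hdegP : g.natDegree + f.natDegree < N := by
    rwa [natDegree_mul (Polynomial.map_ne_zero hg) hf, natDegree_map] at hP
  -- `g * f = ∑ fₛ Xˢ g`, and each `Xˢ g` with `s ≤ deg f` is a codeword.
  have hshift :
      ∀ s ≤ f.natDegree, ∑ i : Fin N, algebraMap F K (v i) * (X ^ s * gK).coeff i = 0 := by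
    intro s hs
    have hdeg : (X ^ s * g).natDegree < N := by
      rw [natDegree_mul (pow_ne_zero _ X_ne_zero) hg, natDegree_X_pow]
      omega
    calc ∑ i : Fin N, algebraMap F K (v i) * (X ^ s * gK).coeff i
        = algebraMap F K (∑ i, v i * toFn N (X ^ s * g) i) := by
          simp [gK, map_sum, ← coeff_map, toFn]
      _ = 0 := by rw [hv _ (toFn_mem_polynomialCode (dvd_mul_left g (X ^ s)) hdeg), map_zero]
  have hcoeff : ∀ i, (gK * f).coeff i =
      ∑ s ∈ range (f.natDegree + 1), f.coeff s * (X ^ s * gK).coeff i := by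
    intro i
    conv_lhs => rw [f.as_sum_range_C_mul_X_pow, mul_sum, finsetSum_coeff]
    refine sum_congr rfl fun s _ => ?_
    rw [show gK * (C (f.coeff s) * X ^ s) = C (f.coeff s) * (X ^ s * gK) by ring, coeff_C_mul]
  simp_rw [hcoeff, mul_sum, mul_left_comm _ (f.coeff _)]
  rw [sum_comm]
  refine sum_eq_zero fun s hs => ?_
  rw [← mul_sum, hshift s (Nat.lt_succ_iff.1 (mem_range.1 hs)), mul_zero]

theorem eq_zero_of_mem_polynomialCode_of_orthogonal {ζ : K} (hζ : IsPrimitiveRoot ζ N)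
    {g : F[X]} (hdvd : g.map (algebraMap F K) ∣ X ^ N - 1)
    (hrev : ∀ b : K, (g.map (algebraMap F K)).IsRoot b → (g.map (algebraMap F K)).IsRoot b⁻¹)
    {v : Fin N → F} (hv : v ∈ polynomialCode N g)
    (hperp : ∀ w ∈ polynomialCode N g, ∑ i, v i * w i = 0) : v = 0 := by
  classical
  rcases N.eq_zero_or_pos with rfl | hN
  · exact Subsingleton.elim _ _
  have hgV : g ∣ ofFn N v := sum_C_mul_X_pow_eq_ofFn v ▸ hv
  have hroots :
      ∀ b ∈ nthRootsFinset N (1 : K), ((ofFn N v).map (algebraMap F K)).eval b = 0 := by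
    intro b hb
    rw [mem_nthRootsFinset hN] at hb
    by_cases hgb : (g.map (algebraMap F K)).IsRoot b
    · exact hgb.dvd (Polynomial.map_dvd _ hgV)
    have hgb' : ¬(g.map (algebraMap F K)).IsRoot b⁻¹ := fun h => hgb (by simpa using hrev _ h)
    have := sum_algebraMap_mul_coeff_eq_zero hperp
      (dvd_ofFn_pow_of_dvd_X_pow_sub_one hdvd hb hgb') (ofFn_natDegree_lt hN _)
    rw [← sum_C_mul_X_pow_eq_ofFn v]
    simpa [eval_finsetSum] using this
  have hV : (ofFn N v).map (algebraMap F K) = 0 :=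
    eq_zero_of_natDegree_lt_card_of_eval_eq_zero' _ _ hroots
      (by rw [hζ.card_nthRootsFinset, natDegree_map]; exact ofFn_natDegree_lt hN v)
  rw [Polynomial.map_eq_zero_iff (algebraMap F K).injective] at hV
  exact injective_ofFn N (hV.trans (ofFn_zero N).symm)

theorem isRoot_inv_of_isRoot_prod (β : K) (s : Finset ℕ) {b : K}
    (hb : (∏ i ∈ s, (X - C (β ^ i)) * (X - C (β⁻¹ ^ i))).IsRoot b) :
    (∏ i ∈ s, (X - C (β ^ i)) * (X - C (β⁻¹ ^ i))).IsRoot b⁻¹ := by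
  simp only [IsRoot, eval_prod, prod_eq_zero_iff, eval_mul, eval_sub, eval_X, eval_C,
    mul_eq_zero, sub_eq_zero] at hb ⊢
  obtain ⟨i, hi, h | h⟩ := hb
  · exact ⟨i, hi, .inr (by rw [h, inv_pow])⟩
  · exact ⟨i, hi, .inl (by rw [h, inv_pow, inv_inv])⟩

theorem prod_dvd_X_pow_sub_one {β : K} (hβ : IsPrimitiveRoot β N) {s : Finset ℕ}
    (hs : ∀ i ∈ s, 0 < i ∧ 2 * i < N) :
    ∏ i ∈ s, (X - C (β ^ i)) * (X - C (β⁻¹ ^ i)) ∣ X ^ N - 1 := by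
  classical
  rcases s.eq_empty_or_nonempty with rfl | ⟨i₀, hi₀⟩
  · simp
  have hN : 0 < N := by have := hs i₀ hi₀; omega
  have hinj : ∀ {γ : K}, IsPrimitiveRoot γ N → Set.InjOn (γ ^ ·) s := fun hγ i hi j hj h =>
    hγ.pow_inj (by have := hs i hi; omega) (by have := hs j hj; omega) h
  have hdisj : Disjoint (s.image (β ^ ·)) (s.image (β⁻¹ ^ ·)) := by
    simp only [disjoint_left, mem_image, not_exists, not_and]
    rintro _ ⟨i, hi, rfl⟩ j hj hji
    obtain ⟨hi0, hi2⟩ := hs i hi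
    obtain ⟨-, hj2⟩ := hs j hj
    have hsum : β ^ (i + j) = 1 := by
      rw [pow_add, ← hji, inv_pow, inv_mul_cancel₀ (pow_ne_zero _ (hβ.ne_zero hN.ne'))]
    have := Nat.le_of_dvd (by omega) ((hβ.pow_eq_one_iff_dvd _).1 hsum)
    omega
  rw [prod_mul_distrib, ← prod_image (f := fun a => X - C a) (hinj hβ),
    ← prod_image (f := fun a => X - C a) (hinj hβ.inv), ← prod_union hdisj,
    X_pow_sub_one_eq_prod hN hβ]
  refine prod_dvd_prod_of_subset _ _ _ fun a ha => (mem_nthRootsFinset hN _).2 ?_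
  rcases mem_union.1 ha with ha | ha <;> obtain ⟨i, -, rfl⟩ := mem_image.1 ha
  · rw [pow_right_comm, hβ.pow_eq_one, one_pow]
  · rw [pow_right_comm, hβ.inv.pow_eq_one, one_pow]

theorem stmt_17_general (m : ℕ) (F K : Type) [Field F] [Field K] [Algebra F K]
    (β : K) (hβ : β ^ (2 ^ m + 1) = 1)
    (hβprim : ∀ k, 0 < k → k < 2 ^ m + 1 → β ^ k ≠ 1)
    (u : ℕ) (hu1 : 1 ≤ u)
    (g : Polynomial F)
    (hg : Polynomial.map (algebraMap F K) g =
      ∏ i ∈ Finset.Icc u (2 ^ m / 2),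
        (Polynomial.X - Polynomial.C (β ^ i)) * (Polynomial.X - Polynomial.C (β⁻¹ ^ i)))
    (C : Set (Fin (2 ^ m + 1) → F))
    (hC : C = {v | g ∣ ∑ i : Fin (2 ^ m + 1), Polynomial.C (v i) * Polynomial.X ^ (i : ℕ)}) :
    ∀ v ∈ C, (∀ w ∈ C, ∑ i, v i * w i = 0) → v = 0 := by
  have hprim : IsPrimitiveRoot β (2 ^ m + 1) := .mk_of_lt β (by positivity) hβ hβprim
  have hexp : ∀ i ∈ Icc u (2 ^ m / 2), 0 < i ∧ 2 * i < 2 ^ m + 1 := fun i hi => by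
    rw [mem_Icc] at hi
    omega
  subst hC
  intro v hv hperp
  exact eq_zero_of_mem_polynomialCode_of_orthogonal hprim
    (hg ▸ prod_dvd_X_pow_sub_one hprim hexp) (hg ▸ fun b => isRoot_inv_of_isRoot_prod β _) hv hperp

theorem stmt_17 (m : ℕ) (hm : 2 ≤ m) (F K : Type) [Field F] [Field K]
    [Fintype F] [Fintype K] [Algebra F K]
    (hF : Fintype.card F = 2 ^ m) (hK : Fintype.card K = (2 ^ m) ^ 2)
    (β : K) (hβ : β ^ (2 ^ m + 1) = 1)
    (hβprim : ∀ k, 0 < k → k < 2 ^ m + 1 → β ^ k ≠ 1)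
    (u : ℕ) (hu1 : 1 ≤ u) (hu2 : u ≤ 2 ^ m / 2)
    (g : Polynomial F)
    (hg : Polynomial.map (algebraMap F K) g =
      ∏ i ∈ Finset.Icc u (2 ^ m / 2),
        (Polynomial.X - Polynomial.C (β ^ i)) * (Polynomial.X - Polynomial.C (β⁻¹ ^ i)))
    (C : Set (Fin (2 ^ m + 1) → F))
    (hC : C = {v | g ∣ ∑ i : Fin (2 ^ m + 1), Polynomial.C (v i) * Polynomial.X ^ (i : ℕ)}) :
    ∀ v ∈ C, (∀ w ∈ C, ∑ i, v i * w i = 0) → v = 0 :=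
  stmt_17_general m F K β hβ hβprim u hu1 g hg C hC
end

section
/- Let C be an [n,k] linear code over GF(r^h). Then the dual of the subfield subcode of the dual equals the trace code: ((C^⊥)|_{GF(r)})^⊥ = Tr_{r^h/r}(C), where Tr is applied componentwise. -/
/-!
For `c ∈ K^n` and `w ∈ F^n` we have `Tr(c) ⬝ w = Tr(c ⬝ w)`. Since `C` is closed under scaling
by `K` and the trace form of the separable extension `K/F` is nondegenerate, `w` lies in the
subfield subcode of `C^⊥` exactly when it is orthogonal to the trace code `Tr(C)`. Hence the left
side is the double orthogonal of `Tr(C)` for the standard dot product on `F^n`, which is `Tr(C)`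
itself by finite-dimensionality.
-/

open Matrix LinearMap

section DotProduct

variable {ι R : Type*} [Fintype ι]

theorem Matrix.dotProductBilin_isRefl [CommSemiring R] :
    BilinForm.IsRefl (dotProductBilin R R : LinearMap.BilinForm R (ι → R)) :=
  fun v w h => by rwa [dotProductBilin_apply_apply, dotProduct_comm] at h

theorem Matrix.dotProductBilin_nondegenerate [CommSemiring R] :
    (dotProductBilin R R : LinearMap.BilinForm R (ι → R)).Nondegenerate :=
  ⟨fun v hv => dotProduct_eq_zero v hv,
    fun w hw => dotProduct_eq_zero w fun v => by rw [dotProduct_comm]; exact hw v⟩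

theorem Matrix.dotProductBilin_orthogonal_orthogonal [Field R] (W : Submodule R (ι → R)) :
    BilinForm.orthogonal (dotProductBilin R R) (BilinForm.orthogonal (dotProductBilin R R) W) = W :=
  BilinForm.orthogonal_orthogonal dotProductBilin_nondegenerate dotProductBilin_isRefl W

end DotProduct

section TraceCode

variable (F : Type*) {K ι : Type*} [Fintype ι]

noncomputable def traceCode [CommRing F] [CommRing K] [Algebra F K] (C : Submodule K (ι → K)) :
    Submodule F (ι → F) :=
  (C.restrictScalars F).map ((Algebra.trace F K).compLeft ι)

variable {F}

theorem Algebra.trace_compLeft_dotProduct [CommRing F] [CommRing K] [Algebra F K]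
    (c : ι → K) (w : ι → F) :
    (Algebra.trace F K).compLeft ι c ⬝ᵥ w = Algebra.trace F K (c ⬝ᵥ (algebraMap F K ∘ w)) := by
  simp only [dotProduct, map_sum, compLeft_apply, Function.comp_apply, mul_comm (c _),
    ← Algebra.smul_def, map_smul, smul_eq_mul, mul_comm (Algebra.trace F K _)]

theorem mem_orthogonal_traceCode_iff [Field F] [Field K] [Algebra F K] [FiniteDimensional F K]
    [Algebra.IsSeparable F K] {C : Submodule K (ι → K)} {w : ι → F} :
    w ∈ BilinForm.orthogonal (dotProductBilin F F) (traceCode F C) ↔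
      ∀ c ∈ C, c ⬝ᵥ (algebraMap F K ∘ w) = 0 := by
  simp only [BilinForm.mem_orthogonal_iff, traceCode, Submodule.mem_map,
    Submodule.restrictScalars_mem, forall_exists_index, and_imp, forall_apply_eq_imp_iff₂,
    dotProductBilin_apply_apply, Algebra.trace_compLeft_dotProduct]
  refine ⟨fun h c hc => (traceForm_nondegenerate F K).2 _ fun x => ?_,
    fun h c hc => by rw [h c hc, map_zero]⟩
  simpa [Algebra.traceForm_apply, smul_dotProduct] using h (x • c) (C.smul_mem x hc)

end TraceCode

theorem stmt_18_general (n : ℕ) (F K : Type) [Field F] [Field K] [Fintype K]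
    [Algebra F K] (C : Submodule K (Fin n → K)) :
    let dual : Set (Fin n → K) := {x | ∀ c ∈ C, ∑ i, c i * x i = 0}
    let subfieldSubcode : Set (Fin n → F) := {w | (fun i => algebraMap F K (w i)) ∈ dual}
    {v : Fin n → F | ∀ w ∈ subfieldSubcode, ∑ i, v i * w i = 0} =
      {v : Fin n → F | ∃ c ∈ C, ∀ i, v i = Algebra.trace F K (c i)} := by
  intro dual subfieldSubcode
  have : FiniteDimensional F K := .of_finite
  have hsub : subfieldSubcode = BilinForm.orthogonal (dotProductBilin F F) (traceCode F C) :=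
    Set.ext fun w => mem_orthogonal_traceCode_iff.symm
  calc {v : Fin n → F | ∀ w ∈ subfieldSubcode, ∑ i, v i * w i = 0}
      = BilinForm.orthogonal (dotProductBilin F F)
          (BilinForm.orthogonal (dotProductBilin F F) (traceCode F C)) := by
        rw [hsub]
        ext v
        exact forall₂_congr fun w _ => Iff.of_eq (congrArg (· = 0) (dotProduct_comm v w))
    _ = traceCode F C := by rw [dotProductBilin_orthogonal_orthogonal]
    _ = {v : Fin n → F | ∃ c ∈ C, ∀ i, v i = Algebra.trace F K (c i)} := by
        ext v; simp [traceCode, funext_iff, eq_comm]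

theorem stmt_18 (n : ℕ) (F K : Type) [Field F] [Field K] [Fintype F] [Fintype K]
    [Algebra F K] (C : Submodule K (Fin n → K)) :
    let dual : Set (Fin n → K) := {x | ∀ c ∈ C, ∑ i, c i * x i = 0}
    let subfieldSubcode : Set (Fin n → F) := {w | (fun i => algebraMap F K (w i)) ∈ dual}
    {v : Fin n → F | ∀ w ∈ subfieldSubcode, ∑ i, v i * w i = 0} =
      {v : Fin n → F | ∃ c ∈ C, ∀ i, v i = Algebra.trace F K (c i)} :=
  stmt_18_general n F K C
end

section
/- Let q = 2^m. The setwise stabilizer in PGL_2(GF(q^2)) of the set U_{q+1} of (q+1)-th roots of unity in PG(1, GF(q^2)) consists exactly of the linear fractional transformations of three types: (I) u ↦ u_0 u with u_0 ∈ U_{q+1}; (II) u ↦ u_0 u^{−1} with u_0 ∈ U_{q+1}; (III) u ↦ (u + c^q u_0)/(cu + u_0) with u_0 ∈ U_{q+1} and c ∈ GF(q^2)* \ U_{q+1}. -/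
/-!
Write `q = p ^ n` and `N x = x ^ (q + 1)`, so that `U = {N = 1}` and `u ^ q = u⁻¹` on `U`. If
`u ↦ (a u + b) / (c u + d)` maps `U` into `U`, then `N (a u + b) = N (c u + d)` for `u ∈ U`, and
multiplying by `u` turns this into a quadratic equation in `u` (the Frobenius `x ↦ x ^ q` is
additive). As `U` is cyclic of order `q + 1 ≥ 3`, the three coefficients vanish:
`a b^q = c d^q`, `a^q b = c^q d` and `N a + N b = N c + N d`. Together with `a d - b c ≠ 0` these
force `b = 0` when `c = 0` (type I), `d = 0` when `a = 0` (type II), and otherwise `N a = N d`,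
`N a ≠ N c`, which after dividing by `a` is type III. Conversely each type preserves `N = 1`;
for type III this uses `(c ^ q) ^ q = c`, i.e. `|K| = q ^ 2`.
-/

section Field

variable {K : Type*} [Field K]

theorem quadratic_coeffs_eq_zero_of_three_roots {α β γ u₁ u₂ u₃ : K}
    (h₁₂ : u₁ ≠ u₂) (h₁₃ : u₁ ≠ u₃) (h₂₃ : u₂ ≠ u₃)
    (e₁ : α * u₁ ^ 2 + β * u₁ + γ = 0) (e₂ : α * u₂ ^ 2 + β * u₂ + γ = 0)
    (e₃ : α * u₃ ^ 2 + β * u₃ + γ = 0) : α = 0 ∧ β = 0 ∧ γ = 0 := by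
  have hα : α = 0 := by
    have h : α * ((u₁ - u₂) * (u₁ - u₃) * (u₂ - u₃)) = 0 := by
      linear_combination (u₂ - u₃) * e₁ - (u₁ - u₃) * e₂ + (u₁ - u₂) * e₃
    simpa [sub_ne_zero.2 h₁₂, sub_ne_zero.2 h₁₃, sub_ne_zero.2 h₂₃] using h
  have hβ : β = 0 := by
    have h : β * (u₁ - u₂) = 0 := by linear_combination e₁ - e₂ - (u₁ ^ 2 - u₂ ^ 2) * hα
    simpa [sub_ne_zero.2 h₁₂] using h
  exact ⟨hα, hβ, by linear_combination e₁ - u₁ ^ 2 * hα - u₁ * hβ⟩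

theorem exists_isPrimitiveRoot_of_dvd_card_sub_one [Fintype K] {k : ℕ}
    (hk : k ∣ Fintype.card K - 1) : ∃ ζ : K, IsPrimitiveRoot ζ k := by
  obtain ⟨g, hg⟩ := IsCyclic.exists_ofOrder_eq_natCard (α := Kˣ)
  rw [Nat.card_units, Nat.card_eq_fintype_card] at hg
  have hcard : Fintype.card K - 1 ≠ 0 := by
    have := Fintype.one_lt_card (α := K)
    omega
  rw [← hg] at hk hcard
  have hquot : orderOf g / k ≠ 0 :=
    (Nat.div_ne_zero_iff_of_dvd hk).2 ⟨hcard, by rintro rfl; simp_all⟩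
  refine ⟨(g ^ (orderOf g / k) : Kˣ), IsPrimitiveRoot.coe_units_iff.2 ?_⟩
  convert IsPrimitiveRoot.orderOf (g ^ (orderOf g / k))
  rw [orderOf_pow_of_dvd hquot (Nat.div_dvd_of_dvd hk), Nat.div_div_self hk hcard]

theorem pow_eq_inv_of_pow_succ_eq_one {k : ℕ} {u : K} (hu : u ^ (k + 1) = 1) : u ^ k = u⁻¹ :=
  eq_inv_of_mul_eq_one_left (by rwa [← pow_succ])

theorem denom_ne_zero_and_pow_succ_eq_one_of_forall_eq {q : ℕ} {a b c d : K} {f : K → K}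
    (hf : ∀ u : K, u ^ (q + 1) = 1 → f u ^ (q + 1) = 1)
    (h : ∀ u : K, u ^ (q + 1) = 1 → (a * u + b) / (c * u + d) = f u) (u : K)
    (hu : u ^ (q + 1) = 1) : c * u + d ≠ 0 ∧ ((a * u + b) / (c * u + d)) ^ (q + 1) = 1 := by
  have hfu := hf u hu
  rw [← h u hu] at hfu
  refine ⟨fun h₀ => ?_, hfu⟩
  rw [h₀, div_zero, zero_pow (Nat.succ_ne_zero q)] at hfu
  exact zero_ne_one hfu

section Classification

variable {q : ℕ} {a b c d : K}

theorem exists_forall_div_eq_mul (hq : q ≠ 0) (h₁ : a * b ^ q = c * d ^ q)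
    (h₃ : a ^ q * a + b ^ q * b = c ^ q * c + d ^ q * d) (hdet : a * d - b * c ≠ 0) (hc : c = 0) :
    ∃ u₀ : K, u₀ ^ (q + 1) = 1 ∧ ∀ u, (a * u + b) / (c * u + d) = u₀ * u := by
  subst hc
  have ha : a ≠ 0 := by rintro rfl; simp at hdet
  have hd : d ≠ 0 := by rintro rfl; simp at hdet
  obtain rfl : b = 0 := by simpa [ha, hq] using h₁
  refine ⟨a / d, ?_, fun u => by ring⟩
  rw [div_pow, div_eq_one_iff_eq (pow_ne_zero _ hd), pow_succ, pow_succ]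
  simpa [hq] using h₃

theorem exists_forall_div_eq_mul_inv (hq : q ≠ 0) (h₂ : a ^ q * b = c ^ q * d)
    (h₃ : a ^ q * a + b ^ q * b = c ^ q * c + d ^ q * d) (hdet : a * d - b * c ≠ 0) (hc : c ≠ 0)
    (ha : a = 0) :
    ∃ u₀ : K, u₀ ^ (q + 1) = 1 ∧ ∀ u, (a * u + b) / (c * u + d) = u₀ * u⁻¹ := by
  subst ha
  have hb : b ≠ 0 := by rintro rfl; simp at hdet
  obtain rfl : d = 0 := by simpa [hc, hq] using h₂
  refine ⟨b / c, ?_, fun u => by ring⟩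
  rw [div_pow, div_eq_one_iff_eq (pow_ne_zero _ hc), pow_succ, pow_succ]
  simpa [hq] using h₃

theorem exists_forall_div_eq_add_div_add (h₁ : a * b ^ q = c * d ^ q)
    (h₂ : a ^ q * b = c ^ q * d) (h₃ : a ^ q * a + b ^ q * b = c ^ q * c + d ^ q * d)
    (hdet : a * d - b * c ≠ 0) (hc : c ≠ 0) (ha : a ≠ 0) :
    ∃ u₀ : K, u₀ ^ (q + 1) = 1 ∧ ∃ c' : K, c' ≠ 0 ∧ c' ^ (q + 1) ≠ 1 ∧
      ∀ u, (a * u + b) / (c * u + d) = (u + c' ^ q * u₀) / (c' * u + u₀) := by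
  have hac : a ^ q * a ≠ c ^ q * c := by
    intro hac
    have : (a * d - b * c) * a ^ q = (a ^ q * a - c ^ q * c) * d := by
      linear_combination (-c) * h₂
    simp [hac, ha] at this
    exact hdet this
  have had : a ^ q * a = d ^ q * d := by
    have : (a ^ q * a - c ^ q * c) * (a ^ q * a - d ^ q * d) = 0 := by
      linear_combination (a ^ q * a) * h₃ - (a ^ q * b) * h₁ - (c * d ^ q) * h₂
    simpa [sub_eq_zero, hac] using this
  refine ⟨d / a, ?_, c / a, div_ne_zero hc ha, ?_, fun u => ?_⟩
  · rw [div_pow, div_eq_one_iff_eq (pow_ne_zero _ ha), pow_succ, pow_succ, had]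
  · rwa [div_pow, Ne, div_eq_one_iff_eq (pow_ne_zero _ ha), pow_succ, pow_succ, eq_comm]
  · have hnum : u + (c / a) ^ q * (d / a) = (a * u + b) / a := by
      rw [div_pow]
      field_simp
      linear_combination -h₂
    have hden : c / a * u + d / a = (c * u + d) / a := by field_simp
    rw [hnum, hden, div_div_div_cancel_right₀ ha]

end Classification

section ExpChar

variable {p : ℕ} [ExpChar K p] {n : ℕ}

theorem pow_succ_mul_eq_quadratic (a b : K) {u : K} (hu : u ^ (p ^ n + 1) = 1) :
    (a * u + b) ^ (p ^ n + 1) * u =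
      a * b ^ p ^ n * u ^ 2 + (a ^ p ^ n * a + b ^ p ^ n * b) * u + a ^ p ^ n * b := by
  rw [pow_succ, add_pow_expChar_pow, mul_pow]
  linear_combination (a ^ p ^ n * a * u + a ^ p ^ n * b) * hu

theorem coeffs_eq_of_forall_pow_succ_eq_one [Fintype K] (hK : Fintype.card K = (p ^ n) ^ 2)
    {a b c d : K} (h : ∀ u : K, u ^ (p ^ n + 1) = 1 →
      c * u + d ≠ 0 ∧ ((a * u + b) / (c * u + d)) ^ (p ^ n + 1) = 1) :
    a * b ^ p ^ n = c * d ^ p ^ n ∧ a ^ p ^ n * b = c ^ p ^ n * d ∧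
      a ^ p ^ n * a + b ^ p ^ n * b = c ^ p ^ n * c + d ^ p ^ n * d := by
  have hroot : ∀ u : K, u ^ (p ^ n + 1) = 1 →
      (a * b ^ p ^ n - c * d ^ p ^ n) * u ^ 2
        + ((a ^ p ^ n * a + b ^ p ^ n * b) - (c ^ p ^ n * c + d ^ p ^ n * d)) * u
        + (a ^ p ^ n * b - c ^ p ^ n * d) = 0 := by
    intro u hu
    obtain ⟨hden, hmem⟩ := h u hu
    rw [div_pow, div_eq_one_iff_eq (pow_ne_zero _ hden)] at hmem
    linear_combination u * hmem - pow_succ_mul_eq_quadratic a b hu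
      + pow_succ_mul_eq_quadratic c d hu
  have hq : 2 < p ^ n + 1 := by
    have := Fintype.one_lt_card (α := K)
    rw [hK] at this
    generalize p ^ n = q at this ⊢
    nlinarith
  obtain ⟨ζ, hζ⟩ := exists_isPrimitiveRoot_of_dvd_card_sub_one (K := K) (k := p ^ n + 1)
    (hK ▸ ⟨p ^ n - 1, by simpa using Nat.sq_sub_sq (p ^ n) 1⟩)
  have hdist : ∀ i j, i < 3 → j < 3 → i ≠ j → ζ ^ i ≠ ζ ^ j := fun i j hi hj hij h =>
    hij (hζ.pow_inj (by omega) (by omega) h)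
  obtain ⟨e₁, e₂, e₃⟩ := quadratic_coeffs_eq_zero_of_three_roots
    (by simpa using hdist 0 1) (by simpa using hdist 0 2) (by simpa using hdist 1 2)
    (hroot 1 (one_pow _)) (hroot ζ hζ.pow_eq_one)
    (hroot (ζ ^ 2) (by rw [pow_right_comm, hζ.pow_eq_one, one_pow]))
  exact ⟨sub_eq_zero.1 e₁, sub_eq_zero.1 e₃, sub_eq_zero.1 e₂⟩

theorem add_div_add_pow_succ_eq_one [Fintype K] (hK : Fintype.card K = (p ^ n) ^ 2)
    {u₀ c u : K} (hu₀ : u₀ ^ (p ^ n + 1) = 1) (hc : c ^ (p ^ n + 1) ≠ 1)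
    (hu : u ^ (p ^ n + 1) = 1) : ((u + c ^ p ^ n * u₀) / (c * u + u₀)) ^ (p ^ n + 1) = 1 := by
  have hden : c * u + u₀ ≠ 0 := by
    intro h₀
    apply hc
    have hneg : (-1 : K) ^ (p ^ n + 1) = 1 := by
      rw [pow_succ, neg_one_pow_expChar_pow, neg_one_mul, neg_neg]
    calc c ^ (p ^ n + 1) = (c * u) ^ (p ^ n + 1) := by rw [mul_pow, hu, mul_one]
      _ = (-1) ^ (p ^ n + 1) * u₀ ^ (p ^ n + 1) := by rw [eq_neg_of_add_eq_zero_left h₀, neg_pow]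
      _ = 1 := by rw [hneg, hu₀, one_mul]
  have hcc : (c ^ p ^ n) ^ p ^ n = c := by rw [← pow_mul, ← sq, ← hK, FiniteField.pow_card]
  have hu0 : u ≠ 0 := by rintro rfl; simp at hu
  have hu₀0 : u₀ ≠ 0 := by rintro rfl; simp at hu₀
  rw [div_pow, div_eq_one_iff_eq (pow_ne_zero _ hden), pow_succ, pow_succ, add_pow_expChar_pow,
    add_pow_expChar_pow, mul_pow, mul_pow, hcc, pow_eq_inv_of_pow_succ_eq_one hu,
    pow_eq_inv_of_pow_succ_eq_one hu₀]
  field_simp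
  ring

end ExpChar

end Field

theorem stmt_19_general (m : ℕ) (K : Type) [Field K] [Fintype K]
    (hK : Fintype.card K = (2 ^ m) ^ 2) (a b c d : K) (hdet : a * d - b * c ≠ 0) :
    let q := 2 ^ m
    let U : Set K := {x | x ^ (q + 1) = 1}
    ((∀ u ∈ U, c * u + d ≠ 0 ∧ (a * u + b) / (c * u + d) ∈ U) ↔
      ((∃ u₀ ∈ U, ∀ u ∈ U, (a * u + b) / (c * u + d) = u₀ * u) ∨
        (∃ u₀ ∈ U, ∀ u ∈ U, (a * u + b) / (c * u + d) = u₀ * u⁻¹) ∨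
        (∃ u₀ ∈ U, ∃ c' : K, c' ≠ 0 ∧ c' ∉ U ∧
          ∀ u ∈ U, (a * u + b) / (c * u + d) = (u + c' ^ q * u₀) / (c' * u + u₀)))) := by
  intro q U
  have : CharP K 2 := charP_of_card_eq_prime_pow (f := 2 * m) (by rw [hK, ← pow_mul, mul_comm])
  have hq : q ≠ 0 := by positivity
  constructor
  · intro hmaps
    obtain ⟨h₁, h₂, h₃⟩ := coeffs_eq_of_forall_pow_succ_eq_one hK hmaps
    by_cases hc : c = 0
    · obtain ⟨u₀, hu₀, h⟩ := exists_forall_div_eq_mul hq h₁ h₃ hdet hc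
      exact .inl ⟨u₀, hu₀, fun u _ => h u⟩
    by_cases ha : a = 0
    · obtain ⟨u₀, hu₀, h⟩ := exists_forall_div_eq_mul_inv hq h₂ h₃ hdet hc ha
      exact .inr (.inl ⟨u₀, hu₀, fun u _ => h u⟩)
    · obtain ⟨u₀, hu₀, c', hc', hc'U, h⟩ := exists_forall_div_eq_add_div_add h₁ h₂ h₃ hdet hc ha
      exact .inr (.inr ⟨u₀, hu₀, c', hc', hc'U, fun u _ => h u⟩)
  · rintro (⟨u₀, hu₀, h⟩ | ⟨u₀, hu₀, h⟩ | ⟨u₀, hu₀, c', -, hc'U, h⟩)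
    · refine denom_ne_zero_and_pow_succ_eq_one_of_forall_eq (fun u hu => ?_) h
      rw [mul_pow, hu₀, hu, one_mul]
    · refine denom_ne_zero_and_pow_succ_eq_one_of_forall_eq (fun u hu => ?_) h
      rw [mul_pow, hu₀, inv_pow, hu, inv_one, one_mul]
    · exact denom_ne_zero_and_pow_succ_eq_one_of_forall_eq
        (fun u hu => add_div_add_pow_succ_eq_one hK hu₀ hc'U hu) h

theorem stmt_19 (m : ℕ) (hm : 1 ≤ m) (K : Type) [Field K] [Fintype K]
    (hK : Fintype.card K = (2 ^ m) ^ 2) (a b c d : K) (hdet : a * d - b * c ≠ 0) :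
    let q := 2 ^ m
    let U : Set K := {x | x ^ (q + 1) = 1}
    ((∀ u ∈ U, c * u + d ≠ 0 ∧ (a * u + b) / (c * u + d) ∈ U) ↔
      ((∃ u₀ ∈ U, ∀ u ∈ U, (a * u + b) / (c * u + d) = u₀ * u) ∨
        (∃ u₀ ∈ U, ∀ u ∈ U, (a * u + b) / (c * u + d) = u₀ * u⁻¹) ∨
        (∃ u₀ ∈ U, ∃ c' : K, c' ≠ 0 ∧ c' ∉ U ∧
          ∀ u ∈ U, (a * u + b) / (c * u + d) = (u + c' ^ q * u₀) / (c' * u + u₀)))) :=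
  stmt_19_general m K hK a b c d hdet
end
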